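/- arXiv:2209.00710 — 5 statements merged into one kernel-verified Lean document; each statement's English description precedes it below -/
import Mathlib

section
/- For every real failover capacity B ≥ 1 and every demand multiset J with total size S = Σ_{s ∈ J} s, there exists a feasible solution of J using at most 8·S + 2 machines. -/
/-!
Pack the demands with next-fit into bins of capacity `c = min 1 (B/2) ≥ 1/2` and place each bin
on its own pair of machines: a machine then carries the load of one bin, at most `c ≤ 1`, and
fails over at most `2c ≤ B`. Next-fit closes a bin only when the next demand overflows it, so
each closed bin together with its successor carries more than `c`; counting every demand at most
twice, `(#bins - 1) · c ≤ 2S`, i.e. `#bins ≤ 4S + 1`.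
-/

open scoped BigOperators

/-- A demand multiset for failover capacity `B`: every size lies in `(0, min 1 (B/2)]`. -/
def IsDemandMultiset (B : ℝ) (J : Multiset ℝ) : Prop :=
  ∀ s ∈ J, 0 < s ∧ s ≤ min 1 (B / 2)

/-- A configuration: a multiset of sizes in `(0, min 1 (B/2)]` with total size at most 1
and total size plus maximum size at most `B`. -/
def IsConfig (B : ℝ) (C : Multiset ℝ) : Prop :=
  IsDemandMultiset B C ∧ C.sum ≤ 1 ∧ ∀ s ∈ C, C.sum + s ≤ B

/-- A feasible solution of the demand multiset `J` on `m` machines: each demand is assigned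
to an unordered pair of distinct machines (represented by a symmetric, diagonal-free
family `A u v` of multisets of demands whose total is `J`), satisfying, at every machine `u`,
the Nominal constraint `L_u ≤ 1` and the Failover constraint `L_u + max_{v ≠ u} L_{uv} ≤ B`. -/
def IsFeasibleSolution (B : ℝ) (J : Multiset ℝ) (m : ℕ) : Prop :=
  ∃ A : Fin m → Fin m → Multiset ℝ,
    (∀ u v, A u v = A v u) ∧
    (∀ u, A u u = 0) ∧
    (∑ p ∈ Finset.univ.filter (fun p : Fin m × Fin m => p.1 < p.2), A p.1 p.2) = J ∧
    (∀ u, (∑ v, (A u v).sum) ≤ 1) ∧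
    (∀ u v, v ≠ u → (∑ w, (A u w).sum) + (A u v).sum ≤ B)

/-- A feasible solution of the configuration LP of `J`: a finitely supported nonnegative
vector over configurations whose elements are size values occurring in `J`, covering each
distinct size value `t` at least `2 · mult_t(J)` times. -/
def IsLPSolution (B : ℝ) (J : Multiset ℝ) (x : Multiset ℝ →₀ ℝ) : Prop :=
  (∀ C, 0 ≤ x C) ∧
  (∀ C ∈ x.support, IsConfig B C ∧ ∀ s ∈ C, s ∈ J) ∧
  (∀ t ∈ J, 2 * (J.count t : ℝ) ≤ ∑ C ∈ x.support, x C * (C.count t : ℝ))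

/-- The optimal value `LP_mach(J)` of the configuration LP of `J`. -/
noncomputable def LPmach (B : ℝ) (J : Multiset ℝ) : ℝ :=
  sInf {v | ∃ x : Multiset ℝ →₀ ℝ, IsLPSolution B J x ∧ (∑ C ∈ x.support, x C) = v}

theorem isFeasibleSolution_zero (B : ℝ) : IsFeasibleSolution B 0 0 :=
  ⟨fun _ _ => 0, by simp⟩

theorem isFeasibleSolution_two {B : ℝ} {C : Multiset ℝ} (h₁ : C.sum ≤ 1)
    (h₂ : C.sum + C.sum ≤ B) :
    IsFeasibleSolution B C 2 := by
  refine ⟨fun u v => if u = v then 0 else C, ?_, ?_, ?_, ?_, ?_⟩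
  · intro u v; simp [eq_comm]
  · simp
  · rw [Finset.sum_filter, Fintype.sum_prod_type]
    simp [Fin.sum_univ_two]
  · intro u; fin_cases u <;> simpa
  · intro u v hvu; fin_cases u <;> fin_cases v <;> simp_all

theorem IsFeasibleSolution.add {B : ℝ} (hB : 1 ≤ B) {J J' : Multiset ℝ} {m m' : ℕ}
    (h : IsFeasibleSolution B J m) (h' : IsFeasibleSolution B J' m') :
    IsFeasibleSolution B (J + J') (m + m') := by
  obtain ⟨A, hsymm, hdiag, hsum, hnom, hfail⟩ := h
  obtain ⟨A', hsymm', hdiag', hsum', hnom', hfail'⟩ := h'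
  refine ⟨fun u v =>
    Fin.append (fun i => Fin.append (A i) 0 v) (fun i => Fin.append 0 (A' i) v) u,
    ?_, ?_, ?_, ?_, ?_⟩
  · intro u v
    induction u using Fin.addCases <;> induction v using Fin.addCases <;> simp [hsymm, hsymm']
  · intro u
    induction u using Fin.addCases <;> simp [hdiag, hdiag']
  · rw [Finset.sum_filter, Fintype.sum_prod_type] at hsum hsum' ⊢
    simp [Fin.sum_univ_add, (Fin.strictMono_castAdd m').lt_iff_lt, hsum, hsum']
  · intro u
    induction u using Fin.addCases <;> simp [Fin.sum_univ_add, hnom, hnom']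
  · intro u v hvu
    induction u using Fin.addCases with
    | left i =>
      induction v using Fin.addCases with
      | left j => simpa [Fin.sum_univ_add] using hfail i j (by rintro rfl; exact hvu rfl)
      | right j => simpa [Fin.sum_univ_add] using (hnom i).trans hB
    | right i =>
      induction v using Fin.addCases with
      | left j => simpa [Fin.sum_univ_add] using (hnom' i).trans hB
      | right j => simpa [Fin.sum_univ_add] using hfail' i j (by rintro rfl; exact hvu rfl)

theorem isFeasibleSolution_of_bins {B : ℝ} (hB : 1 ≤ B) (L : List (Multiset ℝ))
    (hL : ∀ C ∈ L, C.sum ≤ 1 ∧ C.sum + C.sum ≤ B) :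
    IsFeasibleSolution B L.sum (2 * L.length) := by
  induction L with
  | nil => exact isFeasibleSolution_zero B
  | cons C L ih =>
    obtain ⟨hC, hL⟩ := List.forall_mem_cons.1 hL
    rw [List.sum_cons, List.length_cons, mul_add_one, Nat.add_comm _ 2]
    exact (isFeasibleSolution_two hC.1 hC.2).add hB (ih hL)

/-- `F` is the bin still open, `L` lists the closed ones. -/
theorem exists_nextFit_packing {c : ℝ} (hc : 0 ≤ c) (J : Multiset ℝ)
    (hJ : ∀ s ∈ J, 0 ≤ s ∧ s ≤ c) :
    ∃ (F : Multiset ℝ) (L : List (Multiset ℝ)),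
      (F :: L).sum = J ∧ (∀ C ∈ F :: L, C.sum ≤ c) ∧
      0 ≤ F.sum ∧ L.length * c + F.sum ≤ 2 * J.sum := by
  induction J using Multiset.induction_on with
  | empty => exact ⟨0, [], by simp, by simpa using hc, le_rfl, by simp⟩
  | cons s J ih =>
    obtain ⟨hs₀, hsc⟩ := hJ s (Multiset.mem_cons_self s J)
    obtain ⟨F, L, hsum, hbins, hF, hcount⟩ := ih fun t ht => hJ t (Multiset.mem_cons_of_mem ht)
    obtain ⟨-, hLc⟩ := List.forall_mem_cons.1 hbins
    rw [Multiset.sum_cons]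
    by_cases hfit : F.sum + s ≤ c
    · refine ⟨s ::ₘ F, L, ?_, ?_, ?_, ?_⟩
      · simp [← hsum]
      · simpa [add_comm s, hfit] using hLc
      · simp only [Multiset.sum_cons]; linarith
      · simp only [Multiset.sum_cons]; linarith
    · refine ⟨{s}, F :: L, ?_, ?_, ?_, ?_⟩
      · simp [← hsum]
      · simpa [hsc] using hbins
      · simpa using hs₀
      · simp only [List.length_cons, Multiset.sum_singleton]; push_cast; linarith

/-- For every failover capacity `B ≥ 1` and every demand multiset `J` with total size
`S = Σ_{s ∈ J} s`, there exists a feasible solution of `J` using at most `8·S + 2` machines. -/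
theorem stmt_1 (B : ℝ) (hB : 1 ≤ B) (J : Multiset ℝ) (hJ : IsDemandMultiset B J) :
    ∃ m : ℕ, (m : ℝ) ≤ 8 * J.sum + 2 ∧ IsFeasibleSolution B J m := by
  set c := min 1 (B / 2)
  have hc : 1 / 2 ≤ c := le_min (by linarith) (by linarith)
  obtain ⟨F, L, hsum, hbins, hF, hcount⟩ :=
    exists_nextFit_packing (by linarith) J fun s hs => ⟨(hJ s hs).1.le, (hJ s hs).2⟩
  refine ⟨2 * (F :: L).length, ?_, hsum ▸ isFeasibleSolution_of_bins hB _ fun C hC => ?_⟩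
  · push_cast [List.length_cons]
    nlinarith
  · have := hbins C hC
    exact ⟨this.trans (min_le_left _ _), by linarith [min_le_right 1 (B / 2)]⟩
end

section
/- For every B ≥ 1 and every demand multiset J whose sizes take exactly T distinct values, there exists an integral solution x of the configuration LP of J with Σ_C x_C ≤ LP_mach(J) + T. -/
open scoped BigOperators

section Aux

lemma exists_sol (B : ℝ) (J : Multiset ℝ) (hJ : IsDemandMultiset B J) :
    ∃ x : Multiset ℝ →₀ ℝ, IsLPSolution B J x := by
  classical
  set f : Multiset ℝ → ℝ := fun C => if C.card = 1 then 2 * (J.count C.sum : ℝ) else 0 with hf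
  have hsupp : ∀ C, f C ≠ 0 → C ∈ J.toFinset.image (fun t => ({t} : Multiset ℝ)) := by
    intro C hC
    by_cases h1 : C.card = 1
    · obtain ⟨a, rfl⟩ := Multiset.card_eq_one.mp h1
      simp only [hf, h1, if_true, Multiset.sum_singleton] at hC
      have ha : a ∈ J := by
        by_contra hna
        rw [Multiset.count_eq_zero_of_notMem hna] at hC
        simp at hC
      exact Finset.mem_image.mpr ⟨a, Multiset.mem_toFinset.mpr ha, rfl⟩
    · simp [hf, h1] at hC
  refine ⟨Finsupp.onFinset _ f hsupp, ?_, ?_, ?_⟩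
  · intro C
    simp only [Finsupp.onFinset_apply, hf]
    split <;> positivity
  · intro C hC
    have hC' : f C ≠ 0 := by simpa using hC
    have := hsupp C hC'
    obtain ⟨a, ha, rfl⟩ := Finset.mem_image.mp this
    have haJ : a ∈ J := Multiset.mem_toFinset.mp ha
    obtain ⟨ha0, ha1⟩ := hJ a haJ
    have hmem : ∀ s ∈ ({a} : Multiset ℝ), s = a := by
      intro s hs; exact Multiset.mem_singleton.mp hs
    refine ⟨⟨?_, ?_, ?_⟩, ?_⟩
    · intro s hs; rw [hmem s hs]; exact ⟨ha0, ha1⟩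
    · rw [Multiset.sum_singleton]; exact ha1.trans (min_le_left _ _)
    · intro s hs; rw [hmem s hs, Multiset.sum_singleton]
      have := ha1.trans (min_le_right _ _); linarith
    · intro s hs; rw [hmem s hs]; exact haJ
  · intro t ht
    have hmemsupp : ({t} : Multiset ℝ) ∈ (Finsupp.onFinset _ f hsupp).support := by
      rw [Finsupp.mem_support_iff]
      simp only [Finsupp.onFinset_apply, hf, Multiset.card_singleton, if_true,
        Multiset.sum_singleton]
      have : 0 < J.count t := Multiset.count_pos.mpr ht
      positivity
    have hterm : (Finsupp.onFinset _ f hsupp) {t} * (({t} : Multiset ℝ).count t : ℝ)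
        = 2 * (J.count t : ℝ) := by
      simp [hf]
    calc 2 * (J.count t : ℝ) = _ := hterm.symm
      _ ≤ _ := Finset.single_le_sum (f := fun C => (Finsupp.onFinset _ f hsupp) C * (C.count t : ℝ))
          (fun C _ => mul_nonneg (by simp only [Finsupp.onFinset_apply, hf]; split <;> positivity)
            (Nat.cast_nonneg _)) hmemsupp

lemma round_sol (B : ℝ) (J : Multiset ℝ) (y : Multiset ℝ →₀ ℝ) (hy : IsLPSolution B J y) :
    ∃ z : Multiset ℝ →₀ ℝ, IsLPSolution B J z ∧ (∀ C, ∃ k : ℕ, z C = k) ∧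
      (∑ C ∈ z.support, z C) ≤ (∑ C ∈ y.support, y C) + y.support.card := by
  classical
  set f : Multiset ℝ → ℝ := fun C => if C ∈ y.support then (⌈y C⌉₊ : ℝ) else 0 with hf
  have hsupp : ∀ C, f C ≠ 0 → C ∈ y.support := by
    intro C hC
    by_contra h
    exact hC (if_neg h)
  set z := Finsupp.onFinset _ f hsupp with hz
  have hzapp : ∀ C, z C = f C := fun C => rfl
  have hzsub : z.support ⊆ y.support := Finsupp.support_onFinset_subset
  have hznn : ∀ C, 0 ≤ z C := by
    intro C; rw [hzapp]; simp only [hf]; split <;> positivity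
  have hsum_eq : ∀ g : Multiset ℝ → ℝ, ∑ C ∈ z.support, z C * g C = ∑ C ∈ y.support, z C * g C := by
    intro g
    refine Finset.sum_subset hzsub (fun C _ hC => ?_)
    rw [Finsupp.notMem_support_iff.mp hC, zero_mul]
  have hge : ∀ C ∈ y.support, y C ≤ z C := by
    intro C hC
    rw [hzapp]; simp only [hf, hC, if_true]
    exact Nat.le_ceil _
  refine ⟨z, ⟨hznn, fun C hC => hy.2.1 C (hzsub hC), ?_⟩, ?_, ?_⟩
  · intro t ht
    rw [hsum_eq]
    refine (hy.2.2 t ht).trans (Finset.sum_le_sum fun C hC => ?_)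
    exact mul_le_mul_of_nonneg_right (hge C hC) (Nat.cast_nonneg _)
  · intro C
    rw [hzapp]; simp only [hf]
    by_cases h : C ∈ y.support
    · exact ⟨⌈y C⌉₊, by simp [h]⟩
    · exact ⟨0, by simp [h]⟩
  · have h1 : ∑ C ∈ z.support, z C = ∑ C ∈ y.support, z C := by
      refine Finset.sum_subset hzsub (fun C _ hC => Finsupp.notMem_support_iff.mp hC)
    rw [h1]
    have h2 : ∀ C ∈ y.support, z C ≤ y C + 1 := by
      intro C hC
      rw [hzapp]; simp only [hf, hC, if_true]
      exact (Nat.ceil_lt_add_one (hy.1 C)).le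
    calc ∑ C ∈ y.support, z C ≤ ∑ C ∈ y.support, (y C + 1) := Finset.sum_le_sum h2
      _ = (∑ C ∈ y.support, y C) + y.support.card := by
          rw [Finset.sum_add_distrib]; simp

lemma reduce_sol (B : ℝ) (J : Multiset ℝ) :
    ∀ n (x : Multiset ℝ →₀ ℝ), x.support.card ≤ n → IsLPSolution B J x →
    ∃ y : Multiset ℝ →₀ ℝ, IsLPSolution B J y ∧ y.support.card ≤ J.toFinset.card ∧
      (∑ C ∈ y.support, y C) ≤ ∑ C ∈ x.support, x C := by
  classical
  intro n
  induction n with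
  | zero => intro x hc hx; exact ⟨x, hx, hc.trans (Nat.zero_le _), le_rfl⟩
  | succ n ih =>
    intro x hc hx
    by_cases hle : x.support.card ≤ J.toFinset.card
    · exact ⟨x, hx, hle, le_rfl⟩
    push_neg at hle
    -- The count vectors are linearly dependent
    have hdep : ¬ LinearIndependent ℝ
        (fun C : x.support => fun t : J.toFinset => (((C : Multiset ℝ).count (t : ℝ)) : ℝ)) := by
      intro h
      have h2 := h.fintype_card_le_finrank
      rw [Module.finrank_fintype_fun_eq_card, Fintype.card_coe, Fintype.card_coe] at h2
      omega
    obtain ⟨g0, hg0sum, i0, hi0⟩ := Fintype.not_linearIndependent_iff.mp hdep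
    obtain ⟨g, hgsum, hgzero, hgne⟩ :
        ∃ g : x.support → ℝ, (∑ i, g i) ≤ 0 ∧
          (∑ i, g i • (fun t : J.toFinset => (((i : Multiset ℝ).count (t : ℝ)) : ℝ))) = 0 ∧
          ∃ i : x.support, g i ≠ 0 := by
      by_cases hs : (∑ i, g0 i) ≤ 0
      · exact ⟨g0, hs, hg0sum, i0, hi0⟩
      · refine ⟨-g0, ?_, ?_, i0, by simpa using hi0⟩
        · simp only [Pi.neg_apply, Finset.sum_neg_distrib]
          linarith [not_le.mp hs]
        · simp only [Pi.neg_apply, neg_smul, Finset.sum_neg_distrib, hg0sum, neg_zero]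
    set lam : Multiset ℝ → ℝ := fun C => if h : C ∈ x.support then g ⟨C, h⟩ else 0 with hlam
    have hlam_mem : ∀ (C) (h : C ∈ x.support), lam C = g ⟨C, h⟩ := by
      intro C h; simp only [hlam, dif_pos h]
    have hlam_nmem : ∀ C, C ∉ x.support → lam C = 0 := by
      intro C h; simp only [hlam, dif_neg h]
    -- transfer sums over attach
    have key : ∀ f : Multiset ℝ → ℝ,
        ∑ C ∈ x.support, lam C * f C = ∑ i : x.support, g i * f (i : Multiset ℝ) := by
      intro f
      rw [← Finset.sum_attach x.support (fun C => lam C * f C)]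
      rw [Finset.univ_eq_attach]
      refine Finset.sum_congr rfl fun i _ => ?_
      rw [hlam_mem _ i.2]
    have hlsum : ∑ C ∈ x.support, lam C ≤ 0 := by
      have := key (fun _ => 1)
      simp only [mul_one] at this
      rw [this]; exact hgsum
    have hlcount : ∀ t ∈ J.toFinset, ∑ C ∈ x.support, lam C * ((C.count t : ℕ) : ℝ) = 0 := by
      intro t ht
      rw [key (fun C => ((C.count t : ℕ) : ℝ))]
      have := congrFun hgzero ⟨t, ht⟩
      simpa [Finset.sum_apply] using this
    -- there is a strictly negative coefficient
    have hex_neg : ∃ C ∈ x.support, lam C < 0 := by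
      by_contra h
      push_neg at h
      have hall : ∀ C ∈ x.support, lam C = 0 := by
        have hzero : ∑ C ∈ x.support, lam C = 0 :=
          le_antisymm hlsum (Finset.sum_nonneg h)
        intro C hC
        exact (Finset.sum_eq_zero_iff_of_nonneg h).mp hzero C hC
      obtain ⟨i, hi⟩ := hgne
      exact hi ((hlam_mem _ i.2).symm.trans (hall _ i.2))
    -- pick the minimizer of x C / (-lam C)
    set D := x.support.filter (fun C => lam C < 0) with hD
    have hDne : D.Nonempty := by
      obtain ⟨C, hC, hCneg⟩ := hex_neg
      exact ⟨C, Finset.mem_filter.mpr ⟨hC, hCneg⟩⟩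
    obtain ⟨C0, hC0D, hmin⟩ := D.exists_min_image (fun C => x C / (-lam C)) hDne
    have hC0supp : C0 ∈ x.support := (Finset.mem_filter.mp hC0D).1
    have hC0neg : lam C0 < 0 := (Finset.mem_filter.mp hC0D).2
    set tstar := x C0 / (-lam C0) with htstar
    have htstar_nn : 0 ≤ tstar := div_nonneg (hx.1 C0) (by linarith)
    have hkey_nn : ∀ C ∈ x.support, 0 ≤ x C + tstar * lam C := by
      intro C hC
      by_cases hneg : lam C < 0
      · have hCD : C ∈ D := Finset.mem_filter.mpr ⟨hC, hneg⟩
        have h1 : tstar ≤ x C / (-lam C) := hmin C hCD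
        have h2 : tstar * (-lam C) ≤ x C := by
          rw [← le_div_iff₀ (by linarith : (0:ℝ) < -lam C)] at *
          exact h1
        nlinarith
      · push_neg at hneg
        have := mul_nonneg htstar_nn hneg
        linarith [hx.1 C]
    set fy : Multiset ℝ → ℝ := fun C => x C + tstar * lam C with hfy
    have hfy_supp : ∀ C, fy C ≠ 0 → C ∈ x.support := by
      intro C hC
      by_contra h
      apply hC
      simp only [hfy, hlam_nmem C h, Finsupp.notMem_support_iff.mp h, mul_zero, add_zero]
    set y := Finsupp.onFinset _ fy hfy_supp with hy
    have hyapp : ∀ C, y C = x C + tstar * lam C := fun C => rfl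
    have hysub : y.support ⊆ x.support := Finsupp.support_onFinset_subset
    have hynn : ∀ C, 0 ≤ y C := by
      intro C
      rw [hyapp]
      by_cases hC : C ∈ x.support
      · exact hkey_nn C hC
      · rw [hlam_nmem C hC, Finsupp.notMem_support_iff.mp hC, mul_zero, add_zero]
    have hyC0 : y C0 = 0 := by
      rw [hyapp, htstar]
      have h0 : -lam C0 ≠ 0 := by linarith
      field_simp
      rw [div_self (by linarith : lam C0 ≠ 0)]; ring
    have hssub : y.support ⊂ x.support := by
      rw [Finset.ssubset_iff_of_subset hysub]
      exact ⟨C0, hC0supp, Finsupp.notMem_support_iff.mpr hyC0⟩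
    have hcard : y.support.card ≤ n := by
      have := Finset.card_lt_card hssub
      omega
    have hsum_eq : ∀ f : Multiset ℝ → ℝ,
        ∑ C ∈ y.support, y C * f C = ∑ C ∈ x.support, y C * f C := by
      intro f
      refine Finset.sum_subset hysub (fun C _ hC => ?_)
      rw [Finsupp.notMem_support_iff.mp hC, zero_mul]
    have hexpand : ∀ f : Multiset ℝ → ℝ,
        ∑ C ∈ x.support, y C * f C
          = (∑ C ∈ x.support, x C * f C) + tstar * ∑ C ∈ x.support, lam C * f C := by
      intro f
      rw [Finset.mul_sum, ← Finset.sum_add_distrib]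
      refine Finset.sum_congr rfl fun C _ => ?_
      rw [hyapp]; ring
    have hy_sol : IsLPSolution B J y := by
      refine ⟨hynn, fun C hC => hx.2.1 C (hysub hC), ?_⟩
      intro t ht
      rw [hsum_eq, hexpand, hlcount t (Multiset.mem_toFinset.mpr ht), mul_zero, add_zero]
      exact hx.2.2 t ht
    have hy_val : (∑ C ∈ y.support, y C) ≤ ∑ C ∈ x.support, x C := by
      have h1 : ∑ C ∈ y.support, y C = ∑ C ∈ y.support, y C * 1 := by simp
      have h2 : ∑ C ∈ x.support, x C = ∑ C ∈ x.support, x C * 1 := by simp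
      rw [h1, h2, hsum_eq, hexpand]
      have h3 : ∑ C ∈ x.support, lam C * 1 ≤ 0 := by simpa using hlsum
      nlinarith
    obtain ⟨w, hw1, hw2, hw3⟩ := ih y hcard hy_sol
    exact ⟨w, hw1, hw2, hw3.trans hy_val⟩

/-- the sum over the support of an integral solution is a natural number -/
lemma sum_nat (z : Multiset ℝ →₀ ℝ) (hz : ∀ C, ∃ k : ℕ, z C = k) :
    ∃ n : ℕ, (∑ C ∈ z.support, z C) = n := by
  classical
  choose k hk using hz
  refine ⟨∑ C ∈ z.support, k C, ?_⟩
  rw [Nat.cast_sum]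
  exact Finset.sum_congr rfl fun C _ => hk C

/-- pipeline: from any solution, get an integral solution with small support and value -/
lemma pipeline (B : ℝ) (J : Multiset ℝ) (x : Multiset ℝ →₀ ℝ) (hx : IsLPSolution B J x) :
    ∃ z : Multiset ℝ →₀ ℝ, IsLPSolution B J z ∧ (∀ C, ∃ k : ℕ, z C = k) ∧
      (∑ C ∈ z.support, z C) ≤ (∑ C ∈ x.support, x C) + J.toFinset.card := by
  obtain ⟨y, hy, hycard, hyval⟩ := reduce_sol B J x.support.card x le_rfl hx
  obtain ⟨z, hz, hzint, hzval⟩ := round_sol B J y hy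
  refine ⟨z, hz, hzint, ?_⟩
  calc (∑ C ∈ z.support, z C) ≤ (∑ C ∈ y.support, y C) + y.support.card := hzval
    _ ≤ (∑ C ∈ x.support, x C) + J.toFinset.card := by
        have : (y.support.card : ℝ) ≤ (J.toFinset.card : ℝ) := Nat.cast_le.mpr hycard
        linarith


end Aux

/-- For every `B ≥ 1` and every demand multiset `J` with exactly `T` distinct size values,
there is an integral solution `x` of the configuration LP of `J` with
`Σ_C x_C ≤ LP_mach(J) + T`. -/
theorem stmt_4 (B : ℝ) (hB : 1 ≤ B) (J : Multiset ℝ) (hJ : IsDemandMultiset B J)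
    (T : ℕ) (hT : J.toFinset.card = T) :
    ∃ x : Multiset ℝ →₀ ℝ, IsLPSolution B J x ∧ (∀ C, ∃ k : ℕ, x C = k) ∧
      (∑ C ∈ x.support, x C) ≤ LPmach B J + T := by
  classical
  subst hT
  set S := {v | ∃ x : Multiset ℝ →₀ ℝ, IsLPSolution B J x ∧ (∑ C ∈ x.support, x C) = v} with hS
  obtain ⟨x₀, hx₀⟩ := exists_sol B J hJ
  have hSne : S.Nonempty := ⟨_, x₀, hx₀, rfl⟩
  set A := {n : ℕ | ∃ z : Multiset ℝ →₀ ℝ, IsLPSolution B J z ∧ (∀ C, ∃ k : ℕ, z C = k) ∧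
      (∑ C ∈ z.support, z C) = n} with hA
  have hAne : A.Nonempty := by
    obtain ⟨z, hz, hzint, _⟩ := pipeline B J x₀ hx₀
    obtain ⟨n, hn⟩ := sum_nat z hzint
    exact ⟨n, z, hz, hzint, hn⟩
  set m := sInf A with hm
  obtain ⟨zm, hzm, hzmint, hzmval⟩ := Nat.sInf_mem hAne
  refine ⟨zm, hzm, hzmint, ?_⟩
  rw [hzmval]
  show (m : ℝ) ≤ LPmach B J + J.toFinset.card
  by_contra hcon
  push_neg at hcon
  set ε := (m : ℝ) - (LPmach B J + J.toFinset.card) with hε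
  have hεpos : 0 < ε := by simp only [hε]; linarith
  obtain ⟨v, hvS, hvlt⟩ := Real.lt_sInf_add_pos hSne hεpos
  obtain ⟨x, hx, hxv⟩ := hvS
  obtain ⟨z, hz, hzint, hzval⟩ := pipeline B J x hx
  obtain ⟨n, hn⟩ := sum_nat z hzint
  have hnA : n ∈ A := ⟨z, hz, hzint, hn⟩
  have hge : (m : ℝ) ≤ (n : ℝ) := Nat.cast_le.mpr (Nat.sInf_le hnA)
  have : (n : ℝ) < m := by
    rw [← hn]
    calc (∑ C ∈ z.support, z C) ≤ (∑ C ∈ x.support, x C) + J.toFinset.card := hzval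
      _ = v + J.toFinset.card := by rw [hxv]
      _ < (sInf S + ε) + J.toFinset.card := by linarith
      _ = (m : ℝ) := by rw [hε]; show (LPmach B J) + _ + _ = _ ; ring
  linarith
end

section
/- Let B ≥ 1, let C be a configuration, let S be a sub-multiset of C, let ε ∈ (0, 1/2], and let k be a natural number with k·ε ≤ Σ_{s ∈ S} s. Then the multiset obtained from C by removing the elements of S and adding max(k − 1, 0) copies of the value ε is again a configuration. -/
open scoped BigOperators

/-- If `B ≥ 1`, `C` is a configuration, `S` is a sub-multiset of `C`, `ε ∈ (0, 1/2]` and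
`k` is a natural number with `k·ε ≤ Σ_{s ∈ S} s`, then removing the elements of `S` from `C`
and adding `max (k-1) 0` copies of `ε` again yields a configuration. -/
theorem stmt_6 (B : ℝ) (hB : 1 ≤ B) (C S : Multiset ℝ) (hC : IsConfig B C)
    (hS : S ≤ C) (ε : ℝ) (hε0 : 0 < ε) (hε : ε ≤ 1 / 2) (k : ℕ)
    (hk : (k : ℝ) * ε ≤ S.sum) :
    IsConfig B ((C - S) + Multiset.replicate (k - 1) ε) := by
  obtain ⟨hDem, hSum1, hSumB⟩ := hC
  have hsub : C - S ≤ C := Multiset.sub_le_self C S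
  have hsplit : (C - S) + S = C := tsub_add_cancel_of_le hS
  have hsumC : (C - S).sum + S.sum = C.sum := by
    rw [← Multiset.sum_add, hsplit]
  have hrep : (Multiset.replicate (k - 1) ε).sum = ((k - 1 : ℕ) : ℝ) * ε := by
    simp [Multiset.sum_replicate, nsmul_eq_mul]
  have hk1 : ((k - 1 : ℕ) : ℝ) * ε ≤ (k : ℝ) * ε := by
    apply mul_le_mul_of_nonneg_right _ hε0.le
    exact_mod_cast Nat.sub_le k 1
  have hnewsum : ((C - S) + Multiset.replicate (k - 1) ε).sum ≤ C.sum := by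
    rw [Multiset.sum_add, hrep, ← hsumC]
    linarith
  have hεB : ε ≤ min 1 (B / 2) := le_min (by linarith) (by linarith)
  refine ⟨?_, le_trans hnewsum hSum1, ?_⟩
  · intro s hs
    rcases Multiset.mem_add.mp hs with h | h
    · exact hDem s (Multiset.mem_of_le hsub h)
    · rw [Multiset.eq_of_mem_replicate h]
      exact ⟨hε0, hεB⟩
  · intro s hs
    rcases Multiset.mem_add.mp hs with h | h
    · have hsC : s ∈ C := Multiset.mem_of_le hsub h
      have := hSumB s hsC
      linarith
    · have heq : s = ε := Multiset.eq_of_mem_replicate h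
      have hk2 : 1 ≤ k - 1 := by
        by_contra hc
        push_neg at hc
        interval_cases h' : (k - 1) <;> simp_all
      have hk3 : 1 ≤ k := le_trans hk2 (Nat.sub_le k 1)
      have hcast : ((k - 1 : ℕ) : ℝ) = (k : ℝ) - 1 := by
        push_cast [hk3]; ring
      have : ((C - S) + Multiset.replicate (k - 1) ε).sum + ε ≤ C.sum := by
        rw [Multiset.sum_add, hrep, hcast, ← hsumC]
        nlinarith
      rw [heq]
      linarith
end

section
/- There exists a constant c > 0 such that the following holds. Let B ≥ 1, let ε ∈ (0, 1/2], let J be a demand multiset, let S be the sub-multiset of J consisting of all elements smaller than ε², and let S̃ be the multiset consisting of ⌈(Σ_{s ∈ S} s)/ε⌉ copies of the value ε. Then LP_mach((J − S) + S̃) ≤ (1 + c·ε)·LP_mach(J) + c. -/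
open scoped BigOperators

/- ### Auxiliary machinery -/

/-- The feasible-value set of the configuration LP. -/
def LPset (B : ℝ) (J : Multiset ℝ) : Set ℝ :=
  {v | ∃ x : Multiset ℝ →₀ ℝ, IsLPSolution B J x ∧ (∑ C ∈ x.support, x C) = v}

lemma LPmach_eq_sInf (B : ℝ) (J : Multiset ℝ) : LPmach B J = sInf (LPset B J) := rfl

lemma LPset_nonneg {B : ℝ} {J : Multiset ℝ} {v : ℝ} (hv : v ∈ LPset B J) : 0 ≤ v := by
  obtain ⟨x, hx, rfl⟩ := hv
  exact Finset.sum_nonneg fun C _ => hx.1 C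

lemma LPmach_nonneg (B : ℝ) (J : Multiset ℝ) : 0 ≤ LPmach B J :=
  Real.sInf_nonneg fun v hv => LPset_nonneg hv

lemma LPmach_le {B : ℝ} {J : Multiset ℝ} {v : ℝ} (hv : v ∈ LPset B J) : LPmach B J ≤ v :=
  csInf_le ⟨0, fun _ hw => LPset_nonneg hw⟩ hv

lemma eval_vec {ι : Type*} (s : Finset ι) (g : ι → Multiset ℝ) (w : ι → ℝ)
    (φ : Multiset ℝ → ℝ) :
    ((∑ i ∈ s, Finsupp.single (g i) (w i)).sum fun D v => v * φ D)
      = ∑ i ∈ s, w i * φ (g i) := by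
  rw [← Finsupp.sum_finset_sum_index (fun a => zero_mul (φ a))
      (fun a b₁ b₂ => add_mul b₁ b₂ (φ a))]
  exact Finset.sum_congr rfl fun i _ => Finsupp.sum_single_index (zero_mul (φ (g i)))

lemma apply_nonneg_vec {ι : Type*} (s : Finset ι) (g : ι → Multiset ℝ) (w : ι → ℝ)
    (hw : ∀ i ∈ s, 0 ≤ w i) (D : Multiset ℝ) :
    0 ≤ (∑ i ∈ s, Finsupp.single (g i) (w i)) D := by
  classical
  rw [Finsupp.finset_sum_apply]
  refine Finset.sum_nonneg fun i hi => ?_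
  rw [Finsupp.single_apply]
  split_ifs
  · exact hw i hi
  · exact le_rfl

lemma support_vec {ι : Type*} (s : Finset ι) (g : ι → Multiset ℝ) (w : ι → ℝ)
    (D : Multiset ℝ) (hD : (∑ i ∈ s, Finsupp.single (g i) (w i)) D ≠ 0) :
    ∃ i ∈ s, g i = D := by
  classical
  by_contra h
  push_neg at h
  apply hD
  rw [Finsupp.finset_sum_apply]
  refine Finset.sum_eq_zero fun i hi => ?_
  rw [Finsupp.single_apply, if_neg (h i hi)]

lemma msum_eq_sum_count (M : Multiset ℝ) (T : Finset ℝ) (h : ∀ t ∈ M, t ∈ T) :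
    M.sum = ∑ t ∈ T, (M.count t : ℝ) * t := by
  classical
  calc M.sum = ∑ t ∈ T, M.count t • t :=
        Finset.sum_multiset_count_of_subset M T
          (fun t ht => h t (Multiset.mem_toFinset.mp ht))
    _ = ∑ t ∈ T, (M.count t : ℝ) * t := Finset.sum_congr rfl fun t _ => by rw [nsmul_eq_mul]

/-- The configuration LP always has a feasible solution (singleton configurations). -/
lemma LPset_nonempty (B : ℝ) (J : Multiset ℝ) (hB : 1 ≤ B) (hJ : IsDemandMultiset B J) :
    (LPset B J).Nonempty := by
  classical
  set x : Multiset ℝ →₀ ℝ :=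
    ∑ t ∈ J.toFinset, Finsupp.single ({t} : Multiset ℝ) (2 * (J.count t : ℝ)) with hxdef
  have hwnn : ∀ t ∈ J.toFinset, 0 ≤ 2 * (J.count t : ℝ) := fun t _ => by positivity
  refine ⟨∑ C ∈ x.support, x C, x, ⟨?_, ?_, ?_⟩, rfl⟩
  · exact fun C => apply_nonneg_vec _ _ _ hwnn C
  · intro C hC
    obtain ⟨t, ht, rfl⟩ := support_vec _ _ _ C (Finsupp.mem_support_iff.mp hC)
    have htJ : t ∈ J := Multiset.mem_toFinset.mp ht
    obtain ⟨ht0, htle⟩ := hJ t htJ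
    refine ⟨⟨?_, ?_, ?_⟩, ?_⟩
    · intro s hs
      rw [Multiset.mem_singleton] at hs
      subst hs; exact ⟨ht0, htle⟩
    · rw [Multiset.sum_singleton]
      exact le_trans htle (min_le_left _ _)
    · intro s hs
      rw [Multiset.mem_singleton] at hs
      subst hs
      rw [Multiset.sum_singleton]
      have : s ≤ B / 2 := le_trans htle (min_le_right _ _)
      linarith
    · intro s hs
      rw [Multiset.mem_singleton] at hs
      subst hs; exact htJ
  · intro t ht
    have : ∑ C ∈ x.support, x C * (C.count t : ℝ)
        = ∑ u ∈ J.toFinset, (2 * (J.count u : ℝ)) * (({u} : Multiset ℝ).count t : ℝ) := by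
      rw [hxdef]
      exact eval_vec _ _ _ _
    rw [this]
    rw [Finset.sum_eq_single_of_mem t (Multiset.mem_toFinset.mpr ht)
      (fun u _ hu => by
        rw [Multiset.count_singleton, if_neg (fun h => hu h.symm)]
        norm_num)]
    rw [Multiset.count_singleton, if_pos rfl]
    norm_num


/- ### The rounding construction -/

/-- Total size of the small items of a configuration. -/
noncomputable def fC (ε : ℝ) (C : Multiset ℝ) : ℝ := (C.filter (fun s => s < ε ^ 2)).sum

/-- Number of `ε`-items to insert into a configuration. -/
noncomputable def jC (ε : ℝ) (C : Multiset ℝ) : ℕ := ⌊fC ε C / ε⌋₊ - 1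

/-- The rounded configuration: small items removed, `jC` copies of `ε` inserted. -/
noncomputable def gC (ε : ℝ) (C : Multiset ℝ) : Multiset ℝ :=
  C.filter (fun s => ¬ s < ε ^ 2) + Multiset.replicate (jC ε C) ε

set_option maxHeartbeats 2000000 in
lemma key_step (B ε : ℝ) (J S S' : Multiset ℝ) (hB : 1 ≤ B) (hε : 0 < ε) (hε2 : ε ≤ 1 / 2)
    (hJ : IsDemandMultiset B J)
    (hS : S = J.filter (fun s => s < ε ^ 2))
    (hS' : S' = Multiset.replicate ⌈S.sum / ε⌉₊ ε)
    (hSsum : 0 < S.sum)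
    (x : Multiset ℝ →₀ ℝ) (hx : IsLPSolution B J x) :
    LPmach B ((J - S) + S') ≤ (1 + 8 * ε) * (∑ C ∈ x.support, x C) + 8 := by
  classical
  obtain ⟨hx1, hx2, hx3⟩ := hx
  set v := ∑ C ∈ x.support, x C with hvdef
  have hv0 : 0 ≤ v := Finset.sum_nonneg fun C _ => hx1 C
  have hε1 : ε ≤ 1 := by linarith
  have hεB : ε ≤ B / 2 := by linarith
  have hεsq : ¬ (ε < ε ^ 2) := by nlinarith
  set n := ⌈S.sum / ε⌉₊ with hndef
  have hn1 : 1 ≤ n := Nat.ceil_pos.mpr (div_pos hSsum hε)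
  set J' := (J - S) + S' with hJ'def
  have hεJ' : ε ∈ J' := by
    rw [hJ'def, hS']
    exact Multiset.mem_add.mpr (Or.inr (Multiset.mem_replicate.mpr ⟨by omega, rfl⟩))
  set k : ℕ := ⌊1 / (2 * ε)⌋₊ with hkdef
  set K : Multiset ℝ := Multiset.replicate k ε with hKdef
  set M : ℝ := (2 * v + 2) * (4 * ε) with hMdef
  have hk1 : 1 ≤ k := Nat.le_floor (by
    rw [Nat.cast_one, le_div_iff₀ (by linarith : (0:ℝ) < 2 * ε)]
    linarith)
  have hk4 : 1 / (4 * ε) ≤ (k : ℝ) := by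
    rcases le_or_gt (1 / (2 * ε)) 2 with h | h
    · have h1 : (1:ℝ) ≤ (k:ℝ) := by exact_mod_cast hk1
      have h2 : 1 / (4 * ε) ≤ 1 := by
        rw [div_le_one (by positivity)]
        rw [div_le_iff₀ (by linarith : (0:ℝ) < 2 * ε)] at h
        linarith
      linarith
    · have h2 := Nat.sub_one_lt_floor (1 / (2 * ε))
      have h3 : 1 / (4 * ε) = (1 / (2 * ε)) / 2 := by
        rw [div_div]; ring_nf
      rw [← hkdef] at h2
      linarith
  have hkle : (k : ℝ) * ε ≤ 1 / 2 := by
    have h1 : (k:ℝ) ≤ 1 / (2 * ε) := Nat.floor_le (by positivity)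
    have h2 : (1 / (2 * ε)) * ε = 1 / 2 := by field_simp
    nlinarith
  have hM0 : 0 ≤ M := mul_nonneg (by linarith) (by linarith)
  have hMk : 2 * v + 2 ≤ M * k := by
    have h1 : (1:ℝ) ≤ 4 * ε * k := by
      have h2 : 4 * ε * (1 / (4 * ε)) = 1 := by field_simp
      nlinarith
    calc 2 * v + 2 = (2 * v + 2) * 1 := by ring
      _ ≤ (2 * v + 2) * (4 * ε * k) := mul_le_mul_of_nonneg_left h1 (by linarith)
      _ = M * k := by rw [hMdef]; ring
  -- per-configuration facts
  have hf0 : ∀ C ∈ x.support, 0 ≤ fC ε C := by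
    intro C hC
    refine Multiset.sum_nonneg fun s hs => ?_
    exact ((hx2 C hC).1.1 s (Multiset.mem_filter.mp hs).1).1.le
  have hjf : ∀ C ∈ x.support, (jC ε C : ℝ) * ε ≤ fC ε C := by
    intro C hC
    have h1 : (jC ε C : ℝ) ≤ fC ε C / ε := by
      calc (jC ε C : ℝ) ≤ (⌊fC ε C / ε⌋₊ : ℝ) :=
            Nat.cast_le.mpr (by unfold jC; omega)
        _ ≤ fC ε C / ε := Nat.floor_le (div_nonneg (hf0 C hC) hε.le)
    calc (jC ε C : ℝ) * ε ≤ (fC ε C / ε) * ε := mul_le_mul_of_nonneg_right h1 hε.le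
      _ = fC ε C := by field_simp
  have hfj : ∀ C ∈ x.support, fC ε C / ε ≤ (jC ε C : ℝ) + 2 := by
    intro C hC
    have h1 : fC ε C / ε < (⌊fC ε C / ε⌋₊ : ℝ) + 1 := Nat.lt_floor_add_one _
    have h2 : ⌊fC ε C / ε⌋₊ ≤ jC ε C + 1 := by unfold jC; omega
    have h2' : (⌊fC ε C / ε⌋₊ : ℝ) ≤ (jC ε C : ℝ) + 1 := by exact_mod_cast h2
    linarith
  have hsplit : ∀ C : Multiset ℝ, (C.filter (fun s => ¬ s < ε ^ 2)).sum = C.sum - fC ε C := by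
    intro C
    have h2 := congrArg Multiset.sum (Multiset.filter_add_not (fun s => s < ε ^ 2) C)
    rw [Multiset.sum_add] at h2
    unfold fC
    linarith
  have hgsum : ∀ C : Multiset ℝ, (gC ε C).sum = C.sum - fC ε C + (jC ε C : ℝ) * ε := by
    intro C
    unfold gC
    rw [Multiset.sum_add, Multiset.sum_replicate, nsmul_eq_mul, hsplit C]
  have hcntg : ∀ (t : ℝ), ¬ (t < ε ^ 2) → ∀ C : Multiset ℝ,
      ((gC ε C).count t : ℝ) = (C.count t : ℝ) + (if t = ε then (jC ε C : ℝ) else 0) := by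
    intro t ht C
    unfold gC
    rw [Multiset.count_add, Multiset.count_filter, if_pos ht, Multiset.count_replicate]
    rcases eq_or_ne t ε with h | h
    · rw [if_pos h.symm, if_pos h]; push_cast; ring
    · rw [if_neg (fun hh => h hh.symm), if_neg h]; push_cast; ring
  -- freed space bound
  have hff : 2 * S.sum ≤ ∑ C ∈ x.support, x C * fC ε C := by
    set T := S.toFinset with hT
    have hTprop : ∀ t ∈ T, (t < ε ^ 2) ∧ t ∈ J ∧ 0 < t := by
      intro t ht
      have htS : t ∈ S := Multiset.mem_toFinset.mp ht
      rw [hS] at htS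
      obtain ⟨htJ, htp⟩ := Multiset.mem_filter.mp htS
      exact ⟨htp, htJ, (hJ t htJ).1⟩
    have h1 : ∀ C ∈ x.support, fC ε C = ∑ t ∈ T, (C.count t : ℝ) * t := by
      intro C hC
      unfold fC
      rw [msum_eq_sum_count (C.filter _) T (fun t htf => by
        obtain ⟨htC, htp⟩ := Multiset.mem_filter.mp htf
        have htJ : t ∈ J := (hx2 C hC).2 t htC
        exact Multiset.mem_toFinset.mpr (by rw [hS]; exact Multiset.mem_filter.mpr ⟨htJ, htp⟩))]
      refine Finset.sum_congr rfl fun t ht => ?_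
      rw [Multiset.count_filter, if_pos (hTprop t ht).1]
    calc 2 * S.sum = ∑ t ∈ T, 2 * ((S.count t : ℝ) * t) := by
          rw [msum_eq_sum_count S T (fun t ht => Multiset.mem_toFinset.mpr ht), Finset.mul_sum]
      _ ≤ ∑ t ∈ T, (∑ C ∈ x.support, x C * (C.count t : ℝ)) * t := by
          refine Finset.sum_le_sum fun t ht => ?_
          obtain ⟨htp, htJ, ht0⟩ := hTprop t ht
          have hcount : S.count t = J.count t := by
            rw [hS, Multiset.count_filter, if_pos htp]
          rw [hcount]
          calc 2 * ((J.count t : ℝ) * t) = (2 * (J.count t : ℝ)) * t := by ring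
            _ ≤ (∑ C ∈ x.support, x C * (C.count t : ℝ)) * t :=
                mul_le_mul_of_nonneg_right (hx3 t htJ) ht0.le
      _ = ∑ t ∈ T, ∑ C ∈ x.support, x C * (C.count t : ℝ) * t :=
          Finset.sum_congr rfl fun t _ => Finset.sum_mul _ _ _
      _ = ∑ C ∈ x.support, ∑ t ∈ T, x C * (C.count t : ℝ) * t := Finset.sum_comm
      _ = ∑ C ∈ x.support, x C * fC ε C := by
          refine Finset.sum_congr rfl fun C hC => ?_
          rw [h1 C hC, Finset.mul_sum]
          exact Finset.sum_congr rfl fun t _ => mul_assoc _ _ _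
  -- number of new ε-items needed
  have hjsum : 2 * (n : ℝ) ≤ (∑ C ∈ x.support, x C * (jC ε C : ℝ)) + (2 * v + 2) := by
    have h1 : (n : ℝ) < S.sum / ε + 1 := by
      rw [hndef]
      exact Nat.ceil_lt_add_one (div_nonneg hSsum.le hε.le)
    have h2 : ∑ C ∈ x.support, x C * (fC ε C / ε) ≤ ∑ C ∈ x.support, x C * ((jC ε C : ℝ) + 2) :=
      Finset.sum_le_sum fun C hC => mul_le_mul_of_nonneg_left (hfj C hC) (hx1 C)
    have h3 : ∑ C ∈ x.support, x C * (fC ε C / ε) = (∑ C ∈ x.support, x C * fC ε C) / ε := by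
      rw [Finset.sum_div]
      exact Finset.sum_congr rfl fun C _ => (mul_div_assoc _ _ _).symm
    have h4 : ∑ C ∈ x.support, x C * ((jC ε C : ℝ) + 2)
        = (∑ C ∈ x.support, x C * (jC ε C : ℝ)) + 2 * v := by
      simp only [mul_add]
      rw [Finset.sum_add_distrib]
      congr 1
      rw [← Finset.sum_mul, hvdef]
      ring
    have h5 : 2 * S.sum / ε ≤ (∑ C ∈ x.support, x C * fC ε C) / ε := by
      gcongr
    have h6 : 2 * (S.sum / ε) = 2 * S.sum / ε := by ring
    rw [h3, h4] at h2
    linarith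
  -- the new LP vector
  set y : Multiset ℝ →₀ ℝ :=
    (∑ C ∈ x.support, Finsupp.single (gC ε C) (x C)) + Finsupp.single K M with hydef
  have hyeval : ∀ φ : Multiset ℝ → ℝ,
      (∑ D ∈ y.support, y D * φ D) = (∑ C ∈ x.support, x C * φ (gC ε C)) + M * φ K := by
    intro φ
    have h0 : (∑ D ∈ y.support, y D * φ D) = y.sum fun D w => w * φ D := rfl
    rw [h0, hydef,
      Finsupp.sum_add_index' (fun a => zero_mul (φ a)) (fun a b₁ b₂ => add_mul b₁ b₂ (φ a)),
      eval_vec, Finsupp.sum_single_index (zero_mul (φ K))]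
  have hynn : ∀ D, 0 ≤ y D := by
    intro D
    rw [hydef, Finsupp.add_apply]
    refine add_nonneg (apply_nonneg_vec _ _ _ (fun C _ => hx1 C) D) ?_
    rw [Finsupp.single_apply]
    split_ifs
    · exact hM0
    · exact le_rfl
  have hysupp : ∀ D ∈ y.support, (∃ C ∈ x.support, gC ε C = D) ∨ D = K := by
    intro D hD
    have hDne : y D ≠ 0 := Finsupp.mem_support_iff.mp hD
    by_contra hcon
    push_neg at hcon
    obtain ⟨h1, h2⟩ := hcon
    apply hDne
    rw [hydef, Finsupp.add_apply, Finsupp.single_apply, if_neg (fun h : K = D => h2 h.symm),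
      add_zero]
    by_contra h3
    obtain ⟨C, hC, hgCD⟩ := support_vec _ _ _ D h3
    exact (h1 C hC) hgCD
  -- the rounded configurations are valid
  have hgcfg : ∀ C ∈ x.support, IsConfig B (gC ε C) ∧ ∀ s ∈ gC ε C, s ∈ J' := by
    intro C hC
    obtain ⟨⟨hCd, hCs, hCf⟩, hCJ⟩ := hx2 C hC
    have hgs := hgsum C
    have hgle : (gC ε C).sum ≤ C.sum := by
      have := hjf C hC
      linarith
    refine ⟨⟨?_, le_trans hgle hCs, ?_⟩, ?_⟩
    · intro s hs
      rcases Multiset.mem_add.mp hs with h | h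
      · exact hCd s (Multiset.mem_filter.mp h).1
      · obtain ⟨-, rfl⟩ := Multiset.mem_replicate.mp h
        exact ⟨hε, le_min hε1 hεB⟩
    · intro s hs
      rcases Multiset.mem_add.mp hs with h | h
      · have := hCf s (Multiset.mem_filter.mp h).1
        linarith
      · obtain ⟨hj0, hsε⟩ := Multiset.mem_replicate.mp h
        have h2 : jC ε C + 1 ≤ ⌊fC ε C / ε⌋₊ := by unfold jC at *; omega
        have h2' : ((jC ε C : ℝ) + 1) ≤ (⌊fC ε C / ε⌋₊ : ℝ) := by exact_mod_cast h2
        have h3 : (⌊fC ε C / ε⌋₊ : ℝ) ≤ fC ε C / ε := Nat.floor_le (div_nonneg (hf0 C hC) hε.le)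
        have h4 : ((jC ε C : ℝ) + 1) * ε ≤ fC ε C := by
          calc ((jC ε C : ℝ) + 1) * ε ≤ (fC ε C / ε) * ε :=
                mul_le_mul_of_nonneg_right (le_trans h2' h3) hε.le
            _ = fC ε C := by field_simp
        have h5 : (gC ε C).sum + s ≤ C.sum := by
          rw [hgs, hsε]
          nlinarith
        linarith
    · intro s hs
      rcases Multiset.mem_add.mp hs with h | h
      · obtain ⟨hsC, hsnp⟩ := Multiset.mem_filter.mp h
        have hsJ : s ∈ J := hCJ s hsC
        refine Multiset.mem_add.mpr (Or.inl ?_)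
        rw [← Multiset.count_pos, Multiset.count_sub, hS, Multiset.count_filter, if_neg hsnp,
          Nat.sub_zero]
        exact Multiset.count_pos.mpr hsJ
      · obtain ⟨-, rfl⟩ := Multiset.mem_replicate.mp h
        exact hεJ'
  have hKsum : K.sum = (k : ℝ) * ε := by
    rw [hKdef, Multiset.sum_replicate, nsmul_eq_mul]
  have hKcfg : IsConfig B K ∧ ∀ s ∈ K, s ∈ J' := by
    refine ⟨⟨?_, ?_, ?_⟩, ?_⟩
    · intro s hs
      obtain ⟨-, rfl⟩ := Multiset.mem_replicate.mp hs
      exact ⟨hε, le_min hε1 hεB⟩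
    · rw [hKsum]; linarith
    · intro s hs
      obtain ⟨-, rfl⟩ := Multiset.mem_replicate.mp hs
      rw [hKsum]; linarith
    · intro s hs
      obtain ⟨-, rfl⟩ := Multiset.mem_replicate.mp hs
      exact hεJ'
  -- counts in J'
  have hcntJ' : ∀ t : ℝ, ¬ (t < ε ^ 2) →
      (J'.count t : ℝ) = (J.count t : ℝ) + (if t = ε then (n : ℝ) else 0) := by
    intro t ht
    rw [hJ'def, Multiset.count_add, Multiset.count_sub, hS, Multiset.count_filter, if_neg ht,
      Nat.sub_zero, hS', Multiset.count_replicate]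
    rcases eq_or_ne t ε with hcase | hcase
    · rw [if_pos hcase.symm, if_pos hcase]; push_cast; ring
    · rw [if_neg (fun hh => hcase hh.symm), if_neg hcase]; push_cast; ring
  -- covering constraints
  have hcover : ∀ t ∈ J', 2 * (J'.count t : ℝ) ≤ ∑ D ∈ y.support, y D * (D.count t : ℝ) := by
    intro t ht
    have htnp : ¬ (t < ε ^ 2) := by
      rcases Multiset.mem_add.mp ht with h | h
      · intro hlt
        have h0 := Multiset.count_pos.mpr h
        rw [Multiset.count_sub, hS, Multiset.count_filter, if_pos hlt] at h0
        omega
      · rw [hS'] at h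
        obtain ⟨-, rfl⟩ := Multiset.mem_replicate.mp h
        exact hεsq
    rw [hyeval (fun D => (D.count t : ℝ)), hcntJ' t htnp]
    by_cases htε : t = ε
    · have hbase : 2 * (J.count t : ℝ) ≤ ∑ C ∈ x.support, x C * (C.count t : ℝ) := by
        by_cases htJ : t ∈ J
        · exact hx3 t htJ
        · rw [Multiset.count_eq_zero_of_notMem htJ]
          push_cast
          simpa using Finset.sum_nonneg fun C _ => mul_nonneg (hx1 C) (Nat.cast_nonneg _)
      have hKcnt : (K.count t : ℝ) = (k : ℝ) := by
        rw [hKdef, Multiset.count_replicate, if_pos htε.symm]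
      have hsum2 : ∑ C ∈ x.support, x C * ((gC ε C).count t : ℝ)
          = (∑ C ∈ x.support, x C * (C.count t : ℝ))
            + ∑ C ∈ x.support, x C * (jC ε C : ℝ) := by
        rw [← Finset.sum_add_distrib]
        refine Finset.sum_congr rfl fun C hC => ?_
        rw [hcntg t htnp C, if_pos htε]
        ring
      rw [hsum2, hKcnt, if_pos htε]
      linarith
    · rw [if_neg htε]
      have hKcnt : (K.count t : ℝ) = 0 := by
        rw [hKdef, Multiset.count_replicate, if_neg (fun hh => htε hh.symm)]
        norm_num
      have htJ : t ∈ J := by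
        rcases Multiset.mem_add.mp ht with h | h
        · exact Multiset.mem_of_le tsub_le_self h
        · rw [hS'] at h
          exact absurd (Multiset.eq_of_mem_replicate h) htε
      have h1 : ∑ C ∈ x.support, x C * (C.count t : ℝ)
          ≤ ∑ C ∈ x.support, x C * ((gC ε C).count t : ℝ) := by
        refine Finset.sum_le_sum fun C hC => ?_
        refine mul_le_mul_of_nonneg_left ?_ (hx1 C)
        rw [hcntg t htnp C, if_neg htε]
        linarith
      have h2 := hx3 t htJ
      rw [hKcnt]
      linarith
  -- total value
  have hval : ∑ D ∈ y.support, y D = v + M := by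
    have h := hyeval (fun _ => 1)
    simpa using h
  have hmem : v + M ∈ LPset B J' := by
    refine ⟨y, ⟨hynn, ?_, hcover⟩, hval⟩
    intro D hD
    rcases hysupp D hD with ⟨C, hC, rfl⟩ | rfl
    · exact hgcfg C hC
    · exact hKcfg
  have hle := LPmach_le hmem
  have hMeq : M = 8 * ε * v + 8 * ε := by rw [hMdef]; ring
  nlinarith [hle, hMeq]

/-- There is a constant `c > 0` such that for every `B ≥ 1`, `ε ∈ (0, 1/2]`, and demand
multiset `J`: if `S` is the sub-multiset of elements of `J` smaller than `ε²` and `S'`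
consists of `⌈(Σ_{s ∈ S} s)/ε⌉` copies of `ε`, then
`LP_mach((J - S) + S') ≤ (1 + c·ε)·LP_mach(J) + c`. -/
theorem stmt_12 :
    ∃ c : ℝ, 0 < c ∧
      ∀ (B ε : ℝ) (J S S' : Multiset ℝ),
        1 ≤ B → 0 < ε → ε ≤ 1 / 2 → IsDemandMultiset B J →
        S = J.filter (fun s => s < ε ^ 2) →
        S' = Multiset.replicate ⌈S.sum / ε⌉₊ ε →
        LPmach B ((J - S) + S') ≤ (1 + c * ε) * LPmach B J + c := by
  classical
  refine ⟨8, by norm_num, ?_⟩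
  intro B ε J S S' hB hε hε2 hJ hS hS'
  by_cases hS0 : S = 0
  · -- trivial case: no small items at all
    have hJ' : (J - S) + S' = J := by
      subst hS'
      rw [hS0]
      simp
    rw [hJ']
    have h0 := LPmach_nonneg B J
    nlinarith [mul_nonneg hε.le h0]
  · -- main case
    have hSsum : 0 < S.sum := by
      obtain ⟨s, hs⟩ := Multiset.exists_mem_of_ne_zero hS0
      have hsJ : s ∈ J := by
        rw [hS] at hs
        exact (Multiset.mem_filter.mp hs).1
      have h0 : 0 < s := (hJ s hsJ).1
      have hnn : ∀ y ∈ S, (0:ℝ) ≤ y := by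
        intro y hy
        rw [hS] at hy
        exact (hJ y (Multiset.mem_filter.mp hy).1).1.le
      exact lt_of_lt_of_le h0 (Multiset.single_le_sum hnn s hs)
    refine le_of_forall_pos_le_add fun δ hδ => ?_
    have hpos : (0:ℝ) < 1 + 8 * ε := by linarith
    obtain ⟨w, hw, hwlt⟩ := Real.lt_sInf_add_pos (LPset_nonempty B J hB hJ) (div_pos hδ hpos)
    obtain ⟨x, hxsol, hxw⟩ := hw
    have hkey := key_step B ε J S S' hB hε hε2 hJ hS hS' hSsum x hxsol
    rw [hxw] at hkey
    have hLP : LPmach B J = sInf (LPset B J) := rfl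
    have h1 : (1 + 8 * ε) * w ≤ (1 + 8 * ε) * (LPmach B J + δ / (1 + 8 * ε)) := by
      refine mul_le_mul_of_nonneg_left ?_ (by linarith)
      rw [hLP]
      linarith
    have h2 : (1 + 8 * ε) * (LPmach B J + δ / (1 + 8 * ε)) = (1 + 8 * ε) * LPmach B J + δ := by
      field_simp
    linarith
end

section
/- There exists a constant c > 0 such that the following holds. Let B ≥ 1, let ε ∈ (0, 1/2], and let J be a demand multiset. Let S be the sub-multiset of J consisting of all elements smaller than ε², and let M = J − S, with elements listed in nonincreasing order s_1 ≥ s_2 ≥ … ≥ s_n, where n ≥ 1; set q = ⌈ε³·n⌉. Let M̃ be the multiset consisting of, for each index i with q < i ≤ n, the value s_{q·⌊(i−1)/q⌋ + 1}, and let S̃ be the multiset consisting of ⌈(Σ_{s ∈ S} s)/ε⌉ copies of the value ε. Then LP_mach(S̃ + M̃) ≤ (1 + c·ε)·LP_mach(J) + c. -/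
open scoped BigOperators

/-!
Both roundings are handled by transforming an LP solution configuration by configuration.
Rounded large items: the item of index `i + q` is rounded to the first element of its group, which
is at most `s i`. Matching each rounded item to such an `s i`, every element `u` of a configuration
is replaced independently by a matched partner `t ≤ u`, with probability proportional to the
matching, or deleted. Expected multiplicities then cover `M'`, and each outcome is again a
configuration, so `LP(S + M') ≤ LP(J)`. Small items: in a configuration, small items of total size
`σ` are replaced by `⌊σ/ε⌋ - 1` copies of `ε`. For a solution of value `v`, these copies cover all
but `2v + 2` of the `2⌈(Σ S)/ε⌉` required copies of `ε`. The rest is covered by configurations of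
`⌊1/ε⌋ - 1 ≥ 1/(4ε)` copies of `ε`, at extra cost at most `8εv + 4`.
-/

open Finsupp

noncomputable def lpValue : (Multiset ℝ →₀ ℝ) →ₗ[ℝ] ℝ :=
  linearCombination ℝ fun _ => 1

noncomputable def lpCoverage (t : ℝ) : (Multiset ℝ →₀ ℝ) →ₗ[ℝ] ℝ :=
  linearCombination ℝ fun C => (C.count t : ℝ)

lemma linearCombination_eq_sum_mul {α : Type*} (w : α → ℝ) (x : α →₀ ℝ) :
    linearCombination ℝ w x = ∑ a ∈ x.support, x a * w a := rfl

lemma lpValue_eq_sum (x : Multiset ℝ →₀ ℝ) : lpValue x = ∑ C ∈ x.support, x C := by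
  simp [lpValue, linearCombination_eq_sum_mul]

lemma lpCoverage_eq_sum (t : ℝ) (x : Multiset ℝ →₀ ℝ) :
    lpCoverage t x = ∑ C ∈ x.support, x C * (C.count t : ℝ) := rfl

lemma lpValue_mapDomain (f : Multiset ℝ → Multiset ℝ) (z : Multiset ℝ →₀ ℝ) :
    lpValue (z.mapDomain f) = lpValue z := by
  rw [lpValue, linearCombination_mapDomain]; rfl

lemma linearCombination_mono {α : Type*} {w w' : α → ℝ} {x : α →₀ ℝ} (hx : ∀ a, 0 ≤ x a)
    (hw : ∀ a ∈ x.support, w a ≤ w' a) : linearCombination ℝ w x ≤ linearCombination ℝ w' x :=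
  Finset.sum_le_sum fun a ha => mul_le_mul_of_nonneg_left (hw a ha) (hx a)

lemma linearCombination_nonneg {α : Type*} {w : α → ℝ} {x : α →₀ ℝ} (hx : ∀ a, 0 ≤ x a)
    (hw : ∀ a, 0 ≤ w a) : 0 ≤ linearCombination ℝ w x :=
  Finset.sum_nonneg fun a _ => mul_nonneg (hx a) (hw a)

section ConfigCombination

variable {B : ℝ} {J : Multiset ℝ} {x y : Multiset ℝ →₀ ℝ}

def IsConfigCombination (B : ℝ) (J : Multiset ℝ) (x : Multiset ℝ →₀ ℝ) : Prop :=
  (∀ C, 0 ≤ x C) ∧ ∀ C ∈ x.support, IsConfig B C ∧ ∀ s ∈ C, s ∈ J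

lemma isLPSolution_iff : IsLPSolution B J x ↔
    IsConfigCombination B J x ∧ ∀ t ∈ J, 2 * (J.count t : ℝ) ≤ lpCoverage t x := by
  rw [IsLPSolution, IsConfigCombination, and_assoc]
  rfl

lemma isConfigCombination_zero : IsConfigCombination B J 0 :=
  ⟨fun _ => le_rfl, by simp⟩

lemma isConfigCombination_single {C : Multiset ℝ} {w : ℝ} (hw : 0 ≤ w) (hC : IsConfig B C)
    (hCJ : ∀ s ∈ C, s ∈ J) : IsConfigCombination B J (single C w) := by
  refine ⟨fun D => ?_, fun D hD => ?_⟩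
  · rw [single_apply]; split_ifs <;> simp [hw]
  · obtain rfl := Finset.mem_singleton.1 (support_single_subset hD)
    exact ⟨hC, hCJ⟩

lemma IsConfigCombination.add (hx : IsConfigCombination B J x) (hy : IsConfigCombination B J y) :
    IsConfigCombination B J (x + y) := by
  classical
  refine ⟨fun C => add_nonneg (hx.1 C) (hy.1 C), fun C hC => ?_⟩
  rcases Finset.mem_union.1 (support_add hC) with hC | hC
  exacts [hx.2 C hC, hy.2 C hC]

lemma IsConfigCombination.smul (hx : IsConfigCombination B J x) {a : ℝ} (ha : 0 ≤ a) :
    IsConfigCombination B J (a • x) :=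
  ⟨fun C => mul_nonneg ha (hx.1 C), fun C hC => hx.2 C (support_smul hC)⟩

lemma IsConfigCombination.linearCombination (hx : ∀ C, 0 ≤ x C)
    {R : Multiset ℝ → Multiset ℝ →₀ ℝ} (hR : ∀ C ∈ x.support, IsConfigCombination B J (R C)) :
    IsConfigCombination B J (linearCombination ℝ R x) :=
  Finset.sum_induction _ _ (fun _ _ => IsConfigCombination.add) isConfigCombination_zero
    fun C hC => (hR C hC).smul (hx C)

lemma IsConfigCombination.mapDomain {J' : Multiset ℝ} (hx : ∀ C, 0 ≤ x C)
    {f : Multiset ℝ → Multiset ℝ} (hf : ∀ C ∈ x.support, IsConfig B (f C) ∧ ∀ s ∈ f C, s ∈ J') :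
    IsConfigCombination B J' (x.mapDomain f) := by
  classical
  refine ⟨mapDomain_nonneg (f := f) hx, fun D hD => ?_⟩
  obtain ⟨C, hC, rfl⟩ := Finset.mem_image.1 (mapDomain_support hD)
  exact hf C hC

lemma exists_isLPSolution (hJ : IsDemandMultiset B J) : ∃ x, IsLPSolution B J x := by
  classical
  refine ⟨∑ t ∈ J.toFinset, single {t} (2 * (J.count t : ℝ)), isLPSolution_iff.2 ⟨?_, ?_⟩⟩
  · refine Finset.sum_induction _ _ (fun _ _ => IsConfigCombination.add)
      isConfigCombination_zero fun t ht => ?_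
    have ht := Multiset.mem_toFinset.1 ht
    have ht1 := (hJ t ht).2
    refine isConfigCombination_single (by positivity) ⟨by simpa [IsDemandMultiset] using hJ t ht,
      by simpa using ht1.trans (min_le_left _ _), ?_⟩ (by simpa)
    simp only [Multiset.mem_singleton, Multiset.sum_singleton, forall_eq]
    linarith [ht1.trans (min_le_right _ _)]
  · intro t ht
    simp only [map_sum, lpCoverage, linearCombination_single, smul_eq_mul,
      Multiset.count_singleton, Nat.cast_ite, Nat.cast_one, Nat.cast_zero, mul_ite, mul_one,
      mul_zero, Finset.sum_ite_eq, Multiset.mem_toFinset, ht, if_true, le_refl]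

lemma LPmach_le_of_transform {J' : Multiset ℝ} {a b : ℝ} (ha : 0 < a) (hJ : ∃ x, IsLPSolution B J x)
    (h : ∀ x, IsLPSolution B J x →
      ∃ x', IsLPSolution B J' x' ∧ lpValue x' ≤ a * lpValue x + b) :
    LPmach B J' ≤ a * LPmach B J + b := by
  have hbdd : BddBelow {v | ∃ x, IsLPSolution B J' x ∧ ∑ C ∈ x.support, x C = v} :=
    ⟨0, by rintro _ ⟨x, hx, rfl⟩; exact Finset.sum_nonneg fun C _ => hx.1 C⟩
  obtain ⟨x₀, hx₀⟩ := hJ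
  suffices (LPmach B J' - b) / a ≤ LPmach B J by
    rw [div_le_iff₀' ha] at this; linarith
  refine le_csInf ⟨_, x₀, hx₀, rfl⟩ ?_
  rintro _ ⟨x, hx, rfl⟩
  obtain ⟨x', hx', hle⟩ := h x hx
  rw [div_le_iff₀' ha, sub_le_iff_le_add, ← lpValue_eq_sum]
  exact (csInf_le hbdd ⟨x', hx', (lpValue_eq_sum x').symm⟩).trans hle

end ConfigCombination

section DoubleCover

variable {B : ℝ} {J : Multiset ℝ} {x : Multiset ℝ →₀ ℝ}

lemma sum_map_eq_sum_count_mul (f : ℝ → ℝ) {C : Multiset ℝ} {F : Finset ℝ}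
    (hC : ∀ a ∈ C, a ∈ F) : (C.map f).sum = ∑ u ∈ F, (C.count u : ℝ) * f u := by
  classical
  rw [Finset.sum_multiset_map_count]
  refine Finset.sum_subset (fun a ha => hC a (Multiset.mem_toFinset.1 ha)) (fun u _ hu => ?_)
    |>.trans (Finset.sum_congr rfl fun u _ => nsmul_eq_mul _ _)
  rw [Multiset.count_eq_zero_of_notMem (mt Multiset.mem_toFinset.2 hu), zero_smul]

lemma linearCombination_sum_map (f : ℝ → ℝ) {F : Finset ℝ}
    (hF : ∀ C ∈ x.support, ∀ a ∈ C, a ∈ F) :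
    linearCombination ℝ (fun C => (C.map f).sum) x = ∑ u ∈ F, f u * lpCoverage u x := by
  simp_rw [linearCombination_eq_sum_mul, lpCoverage_eq_sum, Finset.mul_sum]
  rw [Finset.sum_comm]
  refine Finset.sum_congr rfl fun C hC => ?_
  rw [sum_map_eq_sum_count_mul f (hF C hC), Finset.mul_sum]
  exact Finset.sum_congr rfl fun u _ => by ring

lemma IsLPSolution.two_mul_sum_map_le (hx : IsLPSolution B J x) {f : ℝ → ℝ}
    (hf : ∀ u ∈ J, 0 ≤ f u) :
    2 * (J.map f).sum ≤ linearCombination ℝ (fun C => (C.map f).sum) x := by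
  classical
  obtain ⟨hcomb, hcov⟩ := isLPSolution_iff.1 hx
  rw [linearCombination_sum_map f (F := J.toFinset)
      fun C hC a ha => Multiset.mem_toFinset.2 ((hcomb.2 C hC).2 a ha),
    sum_map_eq_sum_count_mul f fun a ha => Multiset.mem_toFinset.2 ha, Finset.mul_sum]
  refine Finset.sum_le_sum fun u hu => ?_
  have hu := Multiset.mem_toFinset.1 hu
  nlinarith [hcov u hu, hf u hu]

lemma IsLPSolution.two_mul_count_filter_le (hx : IsLPSolution B J x) (q : ℝ → Prop)
    [DecidablePred q] (t : ℝ) :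
    2 * ((J.filter q).count t : ℝ) ≤
      linearCombination ℝ (fun C => ((C.filter q).count t : ℝ)) x := by
  have hnonneg := linearCombination_nonneg (w := fun C => ((C.filter q).count t : ℝ)) hx.1
    fun C => Nat.cast_nonneg _
  by_cases hq : q t
  · simp only [Multiset.count_filter_of_pos hq] at hnonneg ⊢
    by_cases ht : t ∈ J
    · exact (isLPSolution_iff.1 hx).2 t ht
    · simpa [Multiset.count_eq_zero_of_notMem ht] using hnonneg
  · simpa [Multiset.count_filter_of_neg hq] using hnonneg

lemma IsLPSolution.two_mul_sum_filter_le (hx : IsLPSolution B J x) (hJ : ∀ u ∈ J, 0 ≤ u)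
    (p : ℝ → Prop) [DecidablePred p] :
    2 * (J.filter p).sum ≤ linearCombination ℝ (fun C => (C.filter p).sum) x := by
  have hfilter (C : Multiset ℝ) : (C.map fun a => if p a then a else 0).sum = (C.filter p).sum := by
    induction C using Multiset.induction_on with
    | empty => simp
    | cons a C ih => by_cases h : p a <;> simp [h, ih]
  simpa only [hfilter] using hx.two_mul_sum_map_le (f := fun a => if p a then a else 0)
    fun u hu => by split_ifs; exacts [hJ u hu, le_rfl]

end DoubleCover

lemma IsConfig.of_dominated {B : ℝ} {C D : Multiset ℝ} (hC : IsConfig B C)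
    (hD : IsDemandMultiset B D) (hsum : D.sum ≤ C.sum) (hdom : ∀ a ∈ D, ∃ b ∈ C, a ≤ b) :
    IsConfig B D := by
  refine ⟨hD, hsum.trans hC.2.1, fun a ha => ?_⟩
  obtain ⟨b, hb, hab⟩ := hdom a ha
  exact (add_le_add hsum hab).trans (hC.2.2 b hb)

section Replacement

variable (F : Finset ℝ) (κ : ℝ → ℝ → ℝ)

noncomputable def replaceStep (u : ℝ) (z : Multiset ℝ →₀ ℝ) : Multiset ℝ →₀ ℝ :=
  ∑ t ∈ F, κ u t • z.mapDomain (t ::ₘ ·) + (1 - ∑ t ∈ F, κ u t) • z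

/-- The distribution of the multisets obtained from `l` by replacing each entry `u`
independently by `t ∈ F` with probability `κ u t`, and deleting it otherwise. -/
noncomputable def replacement (l : List ℝ) : Multiset ℝ →₀ ℝ :=
  l.foldr (replaceStep F κ) (single 0 1)

variable {F κ}

lemma replacement_cons (u : ℝ) (l : List ℝ) :
    replacement F κ (u :: l) = replaceStep F κ u (replacement F κ l) := rfl

lemma lpCoverage_mapDomain_cons (t t' : ℝ) (z : Multiset ℝ →₀ ℝ) :
    lpCoverage t (z.mapDomain (t' ::ₘ ·)) = lpCoverage t z + if t = t' then lpValue z else 0 := by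
  change linearCombination ℝ _ (z.mapDomain _) = _
  rw [linearCombination_mapDomain, linearCombination_eq_sum_mul, lpCoverage_eq_sum, lpValue_eq_sum]
  split_ifs with h <;> simp [h, mul_add, Finset.sum_add_distrib]

lemma lpValue_replaceStep (u : ℝ) (z : Multiset ℝ →₀ ℝ) :
    lpValue (replaceStep F κ u z) = lpValue z := by
  simp only [replaceStep, map_add, map_sum, map_smul, lpValue_mapDomain, smul_eq_mul,
    ← Finset.sum_mul]
  ring

lemma lpCoverage_replaceStep {t : ℝ} (ht : t ∈ F) (u : ℝ) (z : Multiset ℝ →₀ ℝ) :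
    lpCoverage t (replaceStep F κ u z) = lpCoverage t z + κ u t * lpValue z := by
  simp only [replaceStep, map_add, map_sum, map_smul, lpCoverage_mapDomain_cons, smul_eq_mul,
    mul_add, Finset.sum_add_distrib, ← Finset.sum_mul, mul_ite, mul_zero, Finset.sum_ite_eq, ht,
    if_true]
  ring

lemma lpValue_replacement (l : List ℝ) : lpValue (replacement F κ l) = 1 := by
  induction l with
  | nil => simp [replacement, lpValue]
  | cons u l ih => rw [replacement_cons, lpValue_replaceStep, ih]

lemma lpCoverage_replacement {t : ℝ} (ht : t ∈ F) (l : List ℝ) :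
    lpCoverage t (replacement F κ l) = (l.map (κ · t)).sum := by
  induction l with
  | nil => simp [replacement, lpCoverage]
  | cons u l ih =>
    rw [replacement_cons, lpCoverage_replaceStep ht, ih, lpValue_replacement, List.map_cons,
      List.sum_cons]
    ring

lemma replacement_nonneg (hκ0 : ∀ u t, 0 ≤ κ u t) (hκ1 : ∀ u, ∑ t ∈ F, κ u t ≤ 1)
    (l : List ℝ) (D : Multiset ℝ) : 0 ≤ replacement F κ l D := by
  induction l generalizing D with
  | nil => rw [replacement, List.foldr_nil, single_apply]; split_ifs <;> norm_num
  | cons u l ih =>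
    rw [replacement_cons, replaceStep, Finsupp.add_apply, Finset.sum_apply']
    exact add_nonneg
      (Finset.sum_nonneg fun t _ => mul_nonneg (hκ0 u t) (mapDomain_nonneg (f := (t ::ₘ ·)) ih D))
      (mul_nonneg (sub_nonneg.2 (hκ1 u)) (ih D))

lemma mem_support_replaceStep {u : ℝ} {z : Multiset ℝ →₀ ℝ} {D : Multiset ℝ}
    (hD : D ∈ (replaceStep F κ u z).support) :
    D ∈ z.support ∨ ∃ t ∈ F, κ u t ≠ 0 ∧ ∃ D' ∈ z.support, D = t ::ₘ D' := by
  classical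
  rcases Finset.mem_union.1 (support_add hD) with h | h
  · obtain ⟨t, ht, h⟩ := Finset.mem_biUnion.1 (support_finsetSum h)
    by_cases hκ : κ u t = 0
    · simp [hκ] at h
    obtain ⟨D', hD', rfl⟩ := Finset.mem_image.1 (mapDomain_support (support_smul h))
    exact Or.inr ⟨t, ht, hκ, D', hD', rfl⟩
  · exact Or.inl (support_smul h)

lemma mem_support_replacement (hκ : ∀ u t, κ u t ≠ 0 → t ≤ u) {l : List ℝ}
    (hl : ∀ b ∈ l, 0 ≤ b) {D : Multiset ℝ} (hD : D ∈ (replacement F κ l).support) :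
    D.sum ≤ l.sum ∧ ∀ a ∈ D, a ∈ F ∧ ∃ b ∈ l, a ≤ b := by
  induction l generalizing D with
  | nil =>
    obtain rfl : D = 0 := by simpa [replacement] using support_single_subset hD
    simp
  | cons u l ih =>
    have hu : 0 ≤ u := hl u List.mem_cons_self
    have hl' : ∀ b ∈ l, 0 ≤ b := fun b hb => hl b (List.mem_cons_of_mem u hb)
    rw [List.sum_cons]
    rcases mem_support_replaceStep hD with h | ⟨t, ht, hκt, D', hD', rfl⟩
    · obtain ⟨hsum, hmem⟩ := ih hl' h
      refine ⟨by linarith, fun a ha => ?_⟩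
      obtain ⟨haF, b, hb, hab⟩ := hmem a ha
      exact ⟨haF, b, List.mem_cons_of_mem u hb, hab⟩
    · obtain ⟨hsum, hmem⟩ := ih hl' hD'
      refine ⟨by rw [Multiset.sum_cons]; linarith [hκ u t hκt], fun a ha => ?_⟩
      rcases Multiset.mem_cons.1 ha with rfl | ha
      · exact ⟨ht, u, List.mem_cons_self, hκ u a hκt⟩
      obtain ⟨haF, b, hb, hab⟩ := hmem a ha
      exact ⟨haF, b, List.mem_cons_of_mem u hb, hab⟩

end Replacement

section Matching

variable {α β : Type*} [DecidableEq α] [DecidableEq β]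

lemma Multiset.sum_count_pair_eq_count_map_snd (P : Multiset (α × β)) (b : β) {F : Finset α}
    (hF : ∀ p ∈ P, p.1 ∈ F) : ∑ a ∈ F, P.count (a, b) = (P.map Prod.snd).count b := by
  induction P using Multiset.induction_on with
  | empty => simp
  | cons p P ih =>
    obtain ⟨a', b'⟩ := p
    have ha' : a' ∈ F := hF _ (Multiset.mem_cons_self _ _)
    simp only [Multiset.count_cons, Finset.sum_add_distrib, Multiset.map_cons, Prod.ext_iff,
      ih fun p hp => hF p (Multiset.mem_cons_of_mem hp), Finset.sum_boole]
    split_ifs with h <;> simp [h, Finset.filter_eq', ha']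

lemma Multiset.sum_count_pair_le_count_map_fst (P : Multiset (α × β)) (a : α) (F : Finset β) :
    ∑ b ∈ F, P.count (a, b) ≤ (P.map Prod.fst).count a := by
  induction P using Multiset.induction_on with
  | empty => simp
  | cons p P ih =>
    obtain ⟨a', b'⟩ := p
    simp only [Multiset.count_cons, Finset.sum_add_distrib, Multiset.map_cons, Prod.ext_iff]
    gcongr
    rw [Finset.sum_boole]
    split_ifs <;> simp_all [Finset.card_le_one]

end Matching

lemma exists_isLPSolution_of_kernel {B : ℝ} {J J' : Multiset ℝ} (hJ' : IsDemandMultiset B J')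
    {κ : ℝ → ℝ → ℝ} (hκ0 : ∀ u t, 0 ≤ κ u t) (hκ1 : ∀ u, ∑ t ∈ J'.toFinset, κ u t ≤ 1)
    (hκle : ∀ u t, κ u t ≠ 0 → t ≤ u) (hκcov : ∀ t, (J'.count t : ℝ) ≤ (J.map (κ · t)).sum)
    {x : Multiset ℝ →₀ ℝ} (hx : IsLPSolution B J x) :
    ∃ x', IsLPSolution B J' x' ∧ lpValue x' = lpValue x := by
  classical
  obtain ⟨⟨hx0, hxJ⟩, -⟩ := isLPSolution_iff.1 hx
  set R : Multiset ℝ → Multiset ℝ →₀ ℝ := fun C => replacement J'.toFinset κ C.toList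
  have hRcomb : ∀ C ∈ x.support, IsConfigCombination B J' (R C) := fun C hC => by
    obtain ⟨hC, -⟩ := hxJ C hC
    refine ⟨replacement_nonneg hκ0 hκ1 _, fun D hD => ?_⟩
    obtain ⟨hsum, hmem⟩ := mem_support_replacement hκle
      (fun b hb => (hC.1 b (Multiset.mem_toList.1 hb)).1.le) hD
    have hDJ' : ∀ a ∈ D, a ∈ J' := fun a ha => Multiset.mem_toFinset.1 (hmem a ha).1
    refine ⟨hC.of_dominated (fun a ha => hJ' a (hDJ' a ha)) ?_ fun a ha => ?_, hDJ'⟩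
    · simpa [Multiset.sum_toList] using hsum
    · obtain ⟨-, b, hb, hab⟩ := hmem a ha
      exact ⟨b, Multiset.mem_toList.1 hb, hab⟩
  refine ⟨linearCombination ℝ R x,
    isLPSolution_iff.2 ⟨IsConfigCombination.linearCombination hx0 hRcomb, fun t ht => ?_⟩, ?_⟩
  · have hcov : ∀ C, lpCoverage t (R C) = (C.map (κ · t)).sum := fun C => by
      rw [lpCoverage_replacement (Multiset.mem_toFinset.2 ht), ← Multiset.sum_coe,
        ← Multiset.map_coe, Multiset.coe_toList]
    rw [apply_linearCombination, Function.comp_def]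
    simp only [hcov]
    exact (mul_le_mul_of_nonneg_left (hκcov t) zero_le_two).trans
      (hx.two_mul_sum_map_le fun u _ => hκ0 u t)
  · rw [apply_linearCombination]
    exact congrArg (linearCombination ℝ · x) (funext fun C => lpValue_replacement _)

theorem LPmach_le_of_matching {B : ℝ} {J J' : Multiset ℝ} (hJ : IsDemandMultiset B J)
    (hJ' : IsDemandMultiset B J') (P : Multiset (ℝ × ℝ)) (hP : ∀ p ∈ P, p.2 ≤ p.1)
    (hfst : P.map Prod.fst ≤ J) (hsnd : P.map Prod.snd = J') :
    LPmach B J' ≤ LPmach B J := by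
  classical
  set κ : ℝ → ℝ → ℝ := fun u t => P.count (u, t) / J.count u
  have hκ0 : ∀ u t, 0 ≤ κ u t := fun _ _ => by positivity
  have hκ1 : ∀ u, ∑ t ∈ J'.toFinset, κ u t ≤ 1 := fun u => by
    rw [← Finset.sum_div, ← Nat.cast_sum]
    refine div_le_one_of_le₀ ?_ (Nat.cast_nonneg _)
    exact_mod_cast (P.sum_count_pair_le_count_map_fst u _).trans (Multiset.count_le_of_le u hfst)
  have hκle : ∀ u t, κ u t ≠ 0 → t ≤ u := fun u t h =>
    hP (u, t) (Multiset.count_ne_zero.1 fun h0 => h (by simp [κ, h0]))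
  have hκcov : ∀ t, (J'.count t : ℝ) ≤ (J.map (κ · t)).sum := fun t => by
    rw [sum_map_eq_sum_count_mul _ fun a ha => Multiset.mem_toFinset.2 ha,
      Finset.sum_congr rfl fun u hu => mul_div_cancel₀ _
        (Nat.cast_ne_zero.2 (Multiset.count_ne_zero.2 (Multiset.mem_toFinset.1 hu))),
      ← Nat.cast_sum, P.sum_count_pair_eq_count_map_snd t fun p hp =>
        Multiset.mem_toFinset.2 (Multiset.mem_of_le hfst (Multiset.mem_map_of_mem _ hp)), hsnd]
  suffices h : LPmach B J' ≤ 1 * LPmach B J + 0 by simpa using h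
  refine LPmach_le_of_transform one_pos (exists_isLPSolution hJ) fun x hx => ?_
  obtain ⟨x', hx', hval⟩ := exists_isLPSolution_of_kernel hJ' hκ0 hκ1 hκle hκcov hx
  exact ⟨x', hx', by rw [hval]; simp⟩

-- The `- 1` leaves room for one more block of size `ε`, as the failover constraint requires.
noncomputable def blocks (ε σ : ℝ) : ℕ := ⌊σ / ε⌋₊ - 1

lemma blocks_mul_add_le {ε : ℝ} (hε : 0 < ε) {σ : ℝ} (h : blocks ε σ ≠ 0) :
    (blocks ε σ : ℝ) * ε + ε ≤ σ := by
  have hfl : 1 ≤ ⌊σ / ε⌋₊ := by unfold blocks at h; omega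
  have := (le_div_iff₀ hε).1 (Nat.floor_le (zero_le_one.trans ((Nat.one_le_floor_iff _).1 hfl)))
  rw [blocks, Nat.cast_sub hfl, Nat.cast_one]
  linarith

lemma blocks_mul_le {ε : ℝ} (hε : 0 < ε) {σ : ℝ} (hσ : 0 ≤ σ) : (blocks ε σ : ℝ) * ε ≤ σ := by
  by_cases h : blocks ε σ = 0
  · simpa [h] using hσ
  · linarith [blocks_mul_add_le hε h]

lemma div_sub_two_le_blocks (ε σ : ℝ) : σ / ε - 2 ≤ blocks ε σ := by
  have := Nat.lt_floor_add_one (σ / ε)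
  have : (⌊σ / ε⌋₊ : ℝ) - 1 ≤ blocks ε σ := by
    rw [blocks]; rcases Nat.eq_zero_or_pos ⌊σ / ε⌋₊ with h | h
    · simp [h]
    · rw [Nat.cast_sub h, Nat.cast_one]
  linarith

lemma one_le_four_mul_blocks_one {ε : ℝ} (hε : 0 < ε) (hε2 : ε ≤ 1 / 2) :
    1 ≤ 4 * ε * blocks ε 1 := by
  have h1 : 1 ≤ blocks ε 1 := by
    have : 2 ≤ ⌊1 / ε⌋₊ := Nat.le_floor (by rw [le_div_iff₀ hε]; push_cast; linarith)
    unfold blocks; omega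
  have h2 := div_sub_two_le_blocks ε 1
  have h3 : ε * (1 / ε - 2) = 1 - 2 * ε := by field_simp
  have h4 : (1 : ℝ) ≤ blocks ε 1 := by exact_mod_cast h1
  nlinarith

section Blockify

variable {B ε : ℝ} (p : ℝ → Prop) [DecidablePred p]

noncomputable def blockify (ε : ℝ) (C : Multiset ℝ) : Multiset ℝ :=
  C.filter (fun a => ¬ p a) + Multiset.replicate (blocks ε (C.filter p).sum) ε

variable {p}

lemma isConfig_blockify (hB : 1 ≤ B) (hε : 0 < ε) (hεB : ε ≤ min 1 (B / 2)) {C : Multiset ℝ}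
    (hC : IsConfig B C) : IsConfig B (blockify p ε C) := by
  have hσ : 0 ≤ (C.filter p).sum :=
    Multiset.sum_nonneg fun a ha => (hC.1 a (Multiset.mem_of_mem_filter ha)).1.le
  have hsplit : (C.filter p).sum + (C.filter (fun a => ¬ p a)).sum = C.sum := by
    rw [← Multiset.sum_add, Multiset.filter_add_not]
  have hsum : (blockify p ε C).sum =
      (C.filter (fun a => ¬ p a)).sum + blocks ε (C.filter p).sum * ε := by
    simp [blockify, Multiset.sum_replicate, nsmul_eq_mul]
  have := blocks_mul_le hε hσ
  refine ⟨fun a ha => ?_, by linarith [hC.2.1], fun a ha => ?_⟩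
  · rcases Multiset.mem_add.1 ha with ha | ha
    · exact hC.1 a (Multiset.mem_of_mem_filter ha)
    · rw [Multiset.eq_of_mem_replicate ha]; exact ⟨hε, hεB⟩
  · rcases Multiset.mem_add.1 ha with ha | ha
    · linarith [hC.2.2 a (Multiset.mem_of_mem_filter ha)]
    · obtain ⟨hne, rfl⟩ := Multiset.mem_replicate.1 ha
      linarith [blocks_mul_add_le hε hne, hC.2.1]

lemma isConfig_replicate_blocks_one (hB : 1 ≤ B) (hε : 0 < ε) (hεB : ε ≤ min 1 (B / 2)) :
    IsConfig B (Multiset.replicate (blocks ε 1) ε) := by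
  have hsum : (Multiset.replicate (blocks ε 1) ε).sum = blocks ε 1 * ε := by
    simp [Multiset.sum_replicate, nsmul_eq_mul]
  refine ⟨fun a ha => ?_, ?_, fun a ha => ?_⟩
  · rw [Multiset.eq_of_mem_replicate ha]; exact ⟨hε, hεB⟩
  · rw [hsum]; exact blocks_mul_le hε zero_le_one
  · obtain ⟨hne, rfl⟩ := Multiset.mem_replicate.1 ha
    linarith [blocks_mul_add_le hε hne]

lemma mem_of_mem_blockify {K C : Multiset ℝ} (hK : ∀ a ∈ K, 0 < a) (hCK : ∀ a ∈ C, a ∈ K)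
    (hε : 0 < ε) {a : ℝ} (ha : a ∈ blockify p ε C) :
    a ∈ Multiset.replicate ⌈(K.filter p).sum / ε⌉₊ ε + K.filter (fun a => ¬ p a) := by
  rcases Multiset.mem_add.1 ha with ha | ha
  · rw [Multiset.mem_filter] at ha
    exact Multiset.mem_add.2 (Or.inr (Multiset.mem_filter.2 ⟨hCK a ha.1, ha.2⟩))
  obtain ⟨hne, hae⟩ := Multiset.mem_replicate.1 ha
  obtain ⟨b, hb, hb0⟩ : ∃ b ∈ C.filter p, 0 < b := by
    by_contra! h
    have := Multiset.sum_le_card_nsmul _ 0 h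
    rw [smul_zero] at this
    linarith [blocks_mul_add_le hε hne,
      mul_nonneg (Nat.cast_nonneg (α := ℝ) (blocks ε (C.filter p).sum)) hε.le]
  have hbK : b ∈ K.filter p := Multiset.mem_filter.2 ⟨hCK b (Multiset.mem_of_mem_filter hb),
    (Multiset.mem_filter.1 hb).2⟩
  have : 0 < (K.filter p).sum := hb0.trans_le <| Multiset.single_le_sum
    (fun c hc => (hK c (Multiset.mem_of_mem_filter hc)).le) b hbK
  exact Multiset.mem_add.2 (Or.inl (Multiset.mem_replicate.2 ⟨by positivity, hae⟩))

lemma IsLPSolution.isConfigCombination_mapDomain_blockify {K : Multiset ℝ} {x : Multiset ℝ →₀ ℝ}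
    (hx : IsLPSolution B K x) (hK : IsDemandMultiset B K) (hB : 1 ≤ B) (hε : 0 < ε)
    (hεB : ε ≤ min 1 (B / 2)) :
    IsConfigCombination B (Multiset.replicate ⌈(K.filter p).sum / ε⌉₊ ε +
      K.filter (fun a => ¬ p a)) (x.mapDomain (blockify p ε)) :=
  IsConfigCombination.mapDomain hx.1 fun C hC => ⟨isConfig_blockify hB hε hεB (hx.2.1 C hC).1,
    fun _ ha => mem_of_mem_blockify (fun a ha => (hK a ha).1) (hx.2.1 C hC).2 hε ha⟩

lemma lpCoverage_single_replicate (t ε w : ℝ) (k : ℕ) :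
    lpCoverage t (single (Multiset.replicate k ε) w) = if ε = t then w * k else 0 := by
  simp only [lpCoverage, linearCombination_single, Multiset.count_replicate, smul_eq_mul]
  split_ifs <;> simp

lemma lpCoverage_mapDomain_blockify (t : ℝ) (x : Multiset ℝ →₀ ℝ) :
    lpCoverage t (x.mapDomain (blockify p ε)) =
      linearCombination ℝ (fun C => ((C.filter fun a => ¬ p a).count t : ℝ)) x +
        if ε = t then linearCombination ℝ (fun C => (blocks ε (C.filter p).sum : ℝ)) x else 0 := by
  simp only [lpCoverage, linearCombination_mapDomain, Function.comp_def, blockify,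
    Multiset.count_add, Multiset.count_replicate, Nat.cast_add, Nat.cast_ite, Nat.cast_zero]
  split_ifs <;> simp [linearCombination_eq_sum_mul, mul_add, Finset.sum_add_distrib]

lemma IsLPSolution.div_sub_le_blocks {B : ℝ} {J : Multiset ℝ} {x : Multiset ℝ →₀ ℝ}
    (hx : IsLPSolution B J x) (hJ : ∀ u ∈ J, 0 ≤ u) (hε : 0 < ε) :
    2 * (J.filter p).sum / ε - 2 * lpValue x ≤
      linearCombination ℝ (fun C => (blocks ε (C.filter p).sum : ℝ)) x := by
  have hsplit : linearCombination ℝ (fun C => (C.filter p).sum / ε - 2) x =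
      linearCombination ℝ (fun C => (C.filter p).sum) x / ε - 2 * lpValue x := by
    simp only [linearCombination_eq_sum_mul, lpValue_eq_sum, Finset.sum_div, Finset.mul_sum,
      ← Finset.sum_sub_distrib]
    exact Finset.sum_congr rfl fun C _ => by ring
  have := linearCombination_mono hx.1 fun C _ => div_sub_two_le_blocks ε (C.filter p).sum
  rw [hsplit] at this
  linarith [div_le_div_of_nonneg_right (hx.two_mul_sum_filter_le hJ p) hε.le]

end Blockify

theorem LPmach_replicate_add_filter_le {B ε : ℝ} (hB : 1 ≤ B) (hε : 0 < ε) (hε2 : ε ≤ 1 / 2)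
    {K : Multiset ℝ} (hK : IsDemandMultiset B K) (p : ℝ → Prop) [DecidablePred p] :
    LPmach B (Multiset.replicate ⌈(K.filter p).sum / ε⌉₊ ε + K.filter (fun a => ¬ p a)) ≤
      (1 + 8 * ε) * LPmach B K + 4 := by
  classical
  set S := K.filter p
  have hεB : ε ≤ min 1 (B / 2) := le_min (by linarith) (by linarith)
  have hK0 : ∀ a ∈ K, 0 ≤ a := fun a ha => (hK a ha).1.le
  have hS0 : 0 ≤ S.sum := Multiset.sum_nonneg fun a ha => hK0 a (Multiset.mem_of_mem_filter ha)
  refine LPmach_le_of_transform (by positivity) (exists_isLPSolution hK) fun x hx => ?_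
  set k := blocks ε 1
  set N := linearCombination ℝ (fun C => (blocks ε (C.filter p).sum : ℝ)) x
  -- `G` copies of `ε` are still missing; they are covered by `G / k` filler configurations.
  set G := max 0 (2 * ⌈S.sum / ε⌉₊ - N)
  have hk : 1 ≤ 4 * ε * k := one_le_four_mul_blocks_one hε hε2
  have hk0 : (0 : ℝ) < k := pos_of_mul_pos_right (by linarith) (by positivity : 0 ≤ 4 * ε)
  have hN0 : 0 ≤ N := linearCombination_nonneg hx.1 fun C => Nat.cast_nonneg _
  have hX0 : 0 ≤ lpValue x := linearCombination_nonneg hx.1 fun _ => zero_le_one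
  have hG : G ≤ 2 * lpValue x + 2 := by
    have h1 : 2 * (S.sum / ε) - 2 * lpValue x ≤ N :=
      mul_div_assoc 2 S.sum ε ▸ hx.div_sub_le_blocks hK0 hε
    have h2 := Nat.ceil_lt_add_one (div_nonneg hS0 hε.le)
    exact max_le (by linarith) (by linarith)
  refine ⟨x.mapDomain (blockify p ε) + single (Multiset.replicate k ε) (G / k),
    isLPSolution_iff.2 ⟨?_, fun t ht => ?_⟩, ?_⟩
  · refine (hx.isConfigCombination_mapDomain_blockify hK hB hε hεB).add ?_
    by_cases hG0 : G = 0
    · simpa [hG0] using isConfigCombination_zero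
    have hceil : ⌈S.sum / ε⌉₊ ≠ 0 := fun h => hG0 (by simp [G, h, hN0])
    refine isConfigCombination_single (by positivity) (isConfig_replicate_blocks_one hB hε hεB)
      fun a ha => ?_
    rw [Multiset.eq_of_mem_replicate ha]
    exact Multiset.mem_add.2 (Or.inl (Multiset.mem_replicate.2 ⟨hceil, rfl⟩))
  · rw [map_add, lpCoverage_mapDomain_blockify, lpCoverage_single_replicate,
      div_mul_cancel₀ _ hk0.ne', Multiset.count_add, Multiset.count_replicate]
    have := hx.two_mul_count_filter_le (fun a => ¬ p a) t
    split_ifs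
    · push_cast; linarith [le_max_right 0 (2 * (⌈S.sum / ε⌉₊ : ℝ) - N)]
    · simpa using this
  · have hGk : G / k ≤ 4 * ε * G := by
      rw [div_le_iff₀ hk0]; nlinarith [le_max_left 0 (2 * (⌈S.sum / ε⌉₊ : ℝ) - N)]
    rw [map_add, lpValue_mapDomain]
    simp only [lpValue, linearCombination_single, smul_eq_mul, mul_one] at hG ⊢
    nlinarith

section LinearGrouping

lemma Finset.Ioc_eq_map_Icc_sub {q n : ℕ} (hqn : q ≤ n) :
    Finset.Ioc q n = (Finset.Icc 1 (n - q)).map (addRightEmbedding q) := by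
  rw [Finset.map_add_right_Icc, Nat.sub_add_cancel hqn, add_comm, Finset.Icc_add_one_left_eq_Ioc]

lemma lt_mul_div_add_one {q : ℕ} (hq : 1 ≤ q) (i : ℕ) : i < q * ((i + q - 1) / q) + 1 := by
  have := Nat.div_add_mod (i + q - 1) q
  have := Nat.mod_lt (i + q - 1) (by omega : 0 < q)
  omega

lemma mul_div_add_one_le (q : ℕ) {j : ℕ} (hj : 1 ≤ j) : q * ((j - 1) / q) + 1 ≤ j := by
  have := Nat.mul_div_le (j - 1) q
  omega

lemma mem_map_Icc_of_mem_grouped {s : ℕ → ℝ} {n q : ℕ} {a : ℝ}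
    (ha : a ∈ (Finset.Ioc q n).val.map fun i => s (q * ((i - 1) / q) + 1)) :
    a ∈ (Finset.Icc 1 n).val.map s := by
  obtain ⟨j, hj, rfl⟩ := Multiset.mem_map.1 ha
  rw [Finset.mem_val, Finset.mem_Ioc] at hj
  exact Multiset.mem_map_of_mem s (Finset.mem_Icc.2 ⟨by omega,
    (mul_div_add_one_le q (by omega)).trans hj.2⟩)

theorem LPmach_add_grouped_le {B : ℝ} {S : Multiset ℝ} {s : ℕ → ℝ} {n q : ℕ} (hq : 1 ≤ q)
    (hqn : q ≤ n) (hmono : ∀ i j, 1 ≤ i → i ≤ j → j ≤ n → s j ≤ s i)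
    (hJ : IsDemandMultiset B (S + (Finset.Icc 1 n).val.map s)) :
    LPmach B (S + (Finset.Ioc q n).val.map fun i => s (q * ((i - 1) / q) + 1)) ≤
      LPmach B (S + (Finset.Icc 1 n).val.map s) := by
  set g : ℕ → ℕ := fun i => q * ((i + q - 1) / q) + 1
  have hg : ∀ i ∈ Finset.Icc 1 (n - q), i ≤ g i ∧ g i ≤ n := fun i hi => by
    rw [Finset.mem_Icc] at hi
    exact ⟨(lt_mul_div_add_one hq i).le, (mul_div_add_one_le q (j := i + q) (by omega)).trans
      (by omega)⟩
  have hM' : ((Finset.Ioc q n).val.map fun i => s (q * ((i - 1) / q) + 1)) =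
      (Finset.Icc 1 (n - q)).val.map (s ∘ g) := by
    rw [Finset.Ioc_eq_map_Icc_sub hqn, Finset.map_val, Multiset.map_map]
    rfl
  set P := S.map (fun a => (a, a)) + (Finset.Icc 1 (n - q)).val.map fun i => (s i, s (g i))
  have hfst : P.map Prod.fst ≤ S + (Finset.Icc 1 n).val.map s := by
    simp only [P, Multiset.map_add, Multiset.map_map, Function.comp_def, Multiset.map_id']
    exact add_le_add le_rfl (Multiset.map_le_map (Finset.val_le_iff.2
      (Finset.Icc_subset_Icc_right (Nat.sub_le n q))))
  have hsnd : P.map Prod.snd = S + (Finset.Ioc q n).val.map fun i => s (q * ((i - 1) / q) + 1) := by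
    simp only [P, hM', Multiset.map_add, Multiset.map_map, Function.comp_def, Multiset.map_id']
  refine LPmach_le_of_matching hJ (fun a ha => ?_) P (fun p hp => ?_) hfst hsnd
  · rcases Multiset.mem_add.1 ha with ha | ha
    exacts [hJ a (Multiset.mem_add.2 (Or.inl ha)),
      hJ a (Multiset.mem_add.2 (Or.inr (mem_map_Icc_of_mem_grouped ha)))]
  · rcases Multiset.mem_add.1 hp with hp | hp
    · obtain ⟨a, -, rfl⟩ := Multiset.mem_map.1 hp
      exact le_rfl
    obtain ⟨i, hi, rfl⟩ := Multiset.mem_map.1 hp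
    rw [Finset.mem_val] at hi
    exact hmono i (g i) (Finset.mem_Icc.1 hi).1 (hg i hi).1 (hg i hi).2

end LinearGrouping

/-- There is a constant `c > 0` such that for every `B ≥ 1`, `ε ∈ (0, 1/2]` and demand
multiset `J`: letting `S` be the sub-multiset of elements of `J` smaller than `ε²`,
`M = J - S` with elements listed in nonincreasing order `s 1 ≥ … ≥ s n` (`n ≥ 1`),
`q = ⌈ε³·n⌉`, `M'` the multiset of the values `s (q·⌊(i-1)/q⌋ + 1)` for `q < i ≤ n`, and
`S'` the multiset of `⌈(Σ_{s ∈ S} s)/ε⌉` copies of `ε`, one has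
`LP_mach(S' + M') ≤ (1 + c·ε)·LP_mach(J) + c`. -/
theorem stmt_13 :
    ∃ c : ℝ, 0 < c ∧
      ∀ (B ε : ℝ) (J S M M' S' : Multiset ℝ) (n q : ℕ) (s : ℕ → ℝ),
        1 ≤ B → 0 < ε → ε ≤ 1 / 2 → IsDemandMultiset B J →
        S = J.filter (fun a => a < ε ^ 2) →
        M = J - S →
        1 ≤ n →
        (∀ i j, 1 ≤ i → i ≤ j → j ≤ n → s j ≤ s i) →
        M = (Finset.Icc 1 n).val.map s →
        q = ⌈ε ^ 3 * (n : ℝ)⌉₊ →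
        M' = (Finset.Ioc q n).val.map (fun i => s (q * ((i - 1) / q) + 1)) →
        S' = Multiset.replicate ⌈S.sum / ε⌉₊ ε →
        LPmach B (S' + M') ≤ (1 + c * ε) * LPmach B J + c := by
  refine ⟨8, by norm_num, ?_⟩
  intro B ε J S M M' S' n q s hB hε hε2 hJ hS hM hn hmono hMs hq hM' hS'
  have hq1 : 1 ≤ q := by rw [hq, Nat.one_le_ceil_iff]; positivity
  have hqn : q ≤ n := by
    rw [hq, Nat.ceil_le]
    exact mul_le_of_le_one_left (Nat.cast_nonneg n) (pow_le_one₀ hε.le (by linarith))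
  have hMJ : M = J.filter (fun a => ¬ a < ε ^ 2) := by
    rw [hM, hS, Multiset.sub_filter_eq_filter_not]
  have hJSM : J = S + M := by rw [hMJ, hS, Multiset.filter_add_not]
  have hgroup := LPmach_add_grouped_le hq1 hqn hmono (hMs ▸ hJSM ▸ hJ)
  rw [← hM', ← hMs, ← hJSM] at hgroup
  have hM'M : ∀ a ∈ M', a ∈ M := fun a ha => hMs ▸ mem_map_Icc_of_mem_grouped (hM' ▸ ha)
  have hSsmall : ∀ a ∈ S, a < ε ^ 2 := by
    rw [hS]; exact fun a ha => (Multiset.mem_filter.1 ha).2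
  have hM'large : ∀ a ∈ M', ¬ a < ε ^ 2 := fun a ha => by
    have := hM'M a ha; rw [hMJ] at this; exact (Multiset.mem_filter.1 this).2
  have hK : IsDemandMultiset B (S + M') := fun a ha => hJ a <| by
    rw [hJSM]; exact Multiset.mem_add.2 ((Multiset.mem_add.1 ha).imp_right (hM'M a))
  have hsmall := LPmach_replicate_add_filter_le hB hε hε2 hK (· < ε ^ 2)
  rw [Multiset.filter_add, Multiset.filter_add, Multiset.filter_eq_self.2 hSsmall,
    Multiset.filter_eq_nil.2 hM'large, Multiset.filter_eq_self.2 hM'large,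
    Multiset.filter_eq_nil.2 fun a ha => not_not.2 (hSsmall a ha), add_zero, zero_add,
    ← hS'] at hsmall
  nlinarith
end
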